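/- arXiv:2412.20754 — 8 statements merged into one kernel-verified Lean document; each statement's English description precedes it below -/
import Mathlib

section
/- Let Ω ⊆ ℂ be a connected open set, let f and a sequence (f_n) be holomorphic functions on Ω, and suppose: (i) there is a constant C > 0 with |f_n(z)| ≤ C for all n and all z ∈ Ω; (ii) there is a nonempty open subset Ω' ⊆ Ω such that f_n(z) → f(z) for every z ∈ Ω'. Then f_n → f uniformly on every compact subset of Ω. -/
/-!
On a small circle where `F n → f` pointwise, dominated convergence makes every Cauchy coefficient
of `F n` converge to that of `f`. These coefficients do not depend on the radius, and the uniform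
bound `‖F n‖ ≤ C` gives Cauchy estimates `C / R ^ k` on any larger disc `closedBall c R ⊆ Ω`, so
the power series converge uniformly on every smaller concentric disc. Hence the set of points near
which `F n → f` pointwise is open and relatively closed in `Ω`; by connectedness it is all of `Ω`,
and the same disc argument at every point gives locally uniform convergence.
-/

open Filter Metric Topology
open scoped NNReal ENNReal Real

section PowerSeries

variable {𝕜 E G ι : Type*} [NontriviallyNormedField 𝕜] [NormedAddCommGroup E] [NormedSpace 𝕜 E]
  [NormedAddCommGroup G] [NormedSpace 𝕜 G] {l : Filter ι} {c : E}

theorem HasFPowerSeriesOnBall.norm_le_tsum_norm_mul_pow {g : E → G}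
    {p : FormalMultilinearSeries 𝕜 E G} {R : ℝ≥0∞} {r : ℝ≥0} (hg : HasFPowerSeriesOnBall g p c R)
    (hr : (r : ℝ≥0∞) < R) {z : E} (hz : z ∈ closedBall c r) :
    ‖g z‖ ≤ ∑' k, ‖p k‖ * (r : ℝ) ^ k := by
  have hzR : z ∈ eball c R := (show z ∈ closedEBall c r by rwa [closedEBall_coe]).trans_lt hr
  refine (hg.hasSum_sub hzR).norm_le_of_bounded
    (p.summable_norm_mul_pow (hr.trans_le hg.r_le)).hasSum fun k => ?_
  calc ‖p k fun _ => z - c‖ ≤ ‖p k‖ * ∏ _ : Fin k, ‖z - c‖ := (p k).le_opNorm _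
    _ ≤ ‖p k‖ * (r : ℝ) ^ k := by
      rw [Fin.prod_const]
      gcongr
      exact mem_closedBall_iff_norm.1 hz

theorem tendstoUniformlyOn_closedBall_of_tendsto_of_norm_le [l.NeBot] {F : ι → E → G}
    {f : E → G} {p : ι → FormalMultilinearSeries 𝕜 E G} {q : FormalMultilinearSeries 𝕜 E G}
    {r R : ℝ≥0} {C : ℝ} (hF : ∀ n, HasFPowerSeriesOnBall (F n) (p n) c R)
    (hf : HasFPowerSeriesOnBall f q c R) (hp : ∀ n k, ‖p n k‖ ≤ C * (R : ℝ)⁻¹ ^ k)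
    (hlim : ∀ k, Tendsto (fun n => p n k) l (𝓝 (q k))) (hr : r < R) :
    TendstoUniformlyOn F f l (closedBall c r) := by
  have hq (k : ℕ) : ‖q k‖ ≤ C * (R : ℝ)⁻¹ ^ k :=
    le_of_tendsto (hlim k).norm (Eventually.of_forall (hp · k))
  have hdom (n : ι) (k : ℕ) : ‖‖p n k - q k‖ * (r : ℝ) ^ k‖ ≤ 2 * C * ((r : ℝ) / R) ^ k :=
    calc ‖‖p n k - q k‖ * (r : ℝ) ^ k‖ = ‖p n k - q k‖ * (r : ℝ) ^ k :=
          Real.norm_of_nonneg (by positivity)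
      _ ≤ (C * (R : ℝ)⁻¹ ^ k + C * (R : ℝ)⁻¹ ^ k) * (r : ℝ) ^ k := by
          gcongr
          exact (norm_sub_le _ _).trans (add_le_add (hp n k) (hq k))
      _ = 2 * C * ((r : ℝ) / R) ^ k := by rw [div_eq_mul_inv, mul_pow]; ring
  have hsum : Summable fun k : ℕ => 2 * C * ((r : ℝ) / R) ^ k :=
    (summable_geometric_of_lt_one (div_nonneg r.coe_nonneg R.coe_nonneg)
      ((div_lt_one (NNReal.coe_pos.2 (pos_of_gt hr))).2 hr)).mul_left _
  have htail : Tendsto (fun n => ∑' k, ‖p n k - q k‖ * (r : ℝ) ^ k) l (𝓝 0) := by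
    have := tendsto_tsum_of_dominated_convergence hsum
      (fun k => by simpa using ((hlim k).sub_const (q k)).norm.mul_const ((r : ℝ) ^ k))
      (Eventually.of_forall hdom)
    rwa [tsum_zero] at this
  rw [Metric.tendstoUniformlyOn_iff]
  intro ε hε
  filter_upwards [htail.eventually_lt_const hε] with n hn z hz
  rw [dist_comm, dist_eq_norm]
  exact (((hF n).sub hf).norm_le_tsum_norm_mul_pow (ENNReal.coe_lt_coe.2 hr) hz).trans_lt hn

end PowerSeries

section CauchyPowerSeries

variable {E ι : Type*} [NormedAddCommGroup E] [NormedSpace ℂ E] {l : Filter ι}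
  {F : ι → ℂ → E} {f : ℂ → E} {c : ℂ}

theorem tendsto_circleIntegral_of_dominated_convergence [l.IsCountablyGenerated] {R C : ℝ}
    (hF : ∀ n, CircleIntegrable (F n) c R) (hbound : ∀ n, ∀ z ∈ sphere c |R|, ‖F n z‖ ≤ C)
    (hlim : ∀ z ∈ sphere c |R|, Tendsto (F · z) l (𝓝 (f z))) :
    Tendsto (fun n => ∮ z in C(c, R), F n z) l (𝓝 (∮ z in C(c, R), f z)) := by
  refine intervalIntegral.tendsto_integral_filter_of_dominated_convergence (fun _ => |R| * C)
    (Eventually.of_forall fun n => (hF n).out.def'.aestronglyMeasurable) ?_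
    intervalIntegrable_const
    (Eventually.of_forall fun θ _ => (hlim _ (circleMap_mem_sphere' c R θ)).const_smul _)
  refine Eventually.of_forall fun n => Eventually.of_forall fun θ _ => ?_
  rw [norm_smul, deriv_circleMap, norm_mul, norm_circleMap_zero, Complex.norm_I, mul_one]
  exact mul_le_mul_of_nonneg_left (hbound n _ (circleMap_mem_sphere' c R θ)) (abs_nonneg R)

theorem norm_cauchyPowerSeries_le_of_forall_norm_le {R C : ℝ}
    (hf : ∀ z ∈ sphere c |R|, ‖f z‖ ≤ C) (k : ℕ) :
    ‖cauchyPowerSeries f c R k‖ ≤ C * |R|⁻¹ ^ k := by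
  refine (norm_cauchyPowerSeries_le f c R k).trans
    (mul_le_mul_of_nonneg_right ?_ (by positivity))
  have hint := intervalIntegral.norm_integral_le_of_norm_le_const (a := 0) (b := 2 * π)
    fun θ _ => (norm_norm (f (circleMap c R θ))).trans_le (hf _ (circleMap_mem_sphere' c R θ))
  rw [sub_zero, abs_of_pos Real.two_pi_pos] at hint
  rw [inv_mul_le_iff₀ Real.two_pi_pos]
  linarith [Real.le_norm_self (∫ θ in (0)..2 * π, ‖f (circleMap c R θ)‖)]

theorem tendsto_cauchyPowerSeries_of_tendsto [l.IsCountablyGenerated] {R C : ℝ} (hR : 0 < R)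
    (hF : ∀ n, ContinuousOn (F n) (sphere c R)) (hbound : ∀ n, ∀ z ∈ sphere c R, ‖F n z‖ ≤ C)
    (hlim : ∀ z ∈ sphere c R, Tendsto (F · z) l (𝓝 (f z))) (k : ℕ) :
    Tendsto (fun n => cauchyPowerSeries (F n) c R k) l (𝓝 (cauchyPowerSeries f c R k)) := by
  have hinv : ContinuousOn (fun z => (z - c)⁻¹) (sphere c R) :=
    (continuousOn_id.sub continuousOn_const).inv₀ fun z hz =>
      sub_ne_zero.2 (ne_of_mem_sphere hz hR.ne')
  rw [← abs_of_pos hR] at hinv hF hbound hlim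
  refine ((ContinuousMultilinearMap.piFieldEquiv ℂ (Fin k) E).continuous.tendsto _).comp
    ((tendsto_circleIntegral_of_dominated_convergence (C := |R|⁻¹ ^ k * (|R|⁻¹ * C))
      (fun n => ((hinv.pow k).smul (hinv.smul (hF n))).circleIntegrable') (fun n z hz => ?_)
      fun z hz => ((hlim z hz).const_smul _).const_smul _).const_smul _)
  change ‖(z - c)⁻¹ ^ k • (z - c)⁻¹ • F n z‖ ≤ _
  rw [norm_smul, norm_smul, norm_pow, norm_inv, ← dist_eq_norm, mem_sphere.1 hz]
  gcongr
  exact hbound n z hz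

variable [CompleteSpace E]

theorem DifferentiableOn.cauchyPowerSeries_eq_of_le {g : ℂ → E} {ρ R : ℝ≥0}
    (hg : DifferentiableOn ℂ g (closedBall c R)) (hρ : 0 < ρ) (hρR : ρ ≤ R) :
    cauchyPowerSeries g c ρ = cauchyPowerSeries g c R :=
  ((hg.mono (closedBall_subset_closedBall hρR)).hasFPowerSeriesOnBall
    hρ).hasFPowerSeriesAt.eq_formalMultilinearSeries
      (hg.hasFPowerSeriesOnBall (hρ.trans_le hρR)).hasFPowerSeriesAt

theorem tendstoUniformlyOn_closedBall_of_tendsto_on_sphere [l.IsCountablyGenerated] [l.NeBot]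
    {ρ r R : ℝ≥0} {C : ℝ} (hF : ∀ n, DifferentiableOn ℂ (F n) (closedBall c R))
    (hf : DifferentiableOn ℂ f (closedBall c R)) (hbound : ∀ n, ∀ z ∈ closedBall c R, ‖F n z‖ ≤ C)
    (hρ : 0 < ρ) (hρR : ρ ≤ R) (hlim : ∀ z ∈ sphere c ρ, Tendsto (F · z) l (𝓝 (f z)))
    (hr : r < R) :
    TendstoUniformlyOn F f l (closedBall c r) := by
  have hR : 0 < R := hρ.trans_le hρR
  have hρsub : sphere c ρ ⊆ closedBall c R :=
    sphere_subset_closedBall.trans (closedBall_subset_closedBall hρR)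
  refine tendstoUniformlyOn_closedBall_of_tendsto_of_norm_le (C := C)
    (fun n => (hF n).hasFPowerSeriesOnBall hR) (hf.hasFPowerSeriesOnBall hR)
    (fun n k => ?_) (fun k => ?_) hr
  · have hsphere : sphere c |(R : ℝ)| ⊆ closedBall c R := by
      rw [NNReal.abs_eq]
      exact sphere_subset_closedBall
    have hk := norm_cauchyPowerSeries_le_of_forall_norm_le (fun z hz => hbound n z (hsphere hz)) k
    rwa [NNReal.abs_eq] at hk
  · simp_rw [← hf.cauchyPowerSeries_eq_of_le hρ hρR, ← (hF _).cauchyPowerSeries_eq_of_le hρ hρR]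
    exact tendsto_cauchyPowerSeries_of_tendsto hρ
      (fun n => ((hF n).continuousOn.mono hρsub)) (fun n z hz => hbound n z (hρsub hz)) hlim k

theorem tendstoUniformlyOn_closedBall_of_eventually_tendsto [l.IsCountablyGenerated] [l.NeBot]
    {r R C : ℝ} (hF : ∀ n, DifferentiableOn ℂ (F n) (closedBall c R))
    (hf : DifferentiableOn ℂ f (closedBall c R)) (hbound : ∀ n, ∀ z ∈ closedBall c R, ‖F n z‖ ≤ C)
    (hlim : ∀ᶠ z in 𝓝 c, Tendsto (F · z) l (𝓝 (f z))) (hr₀ : 0 ≤ r) (hr : r < R) :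
    TendstoUniformlyOn F f l (closedBall c r) := by
  obtain ⟨ε, hε, hεlim⟩ := nhds_basis_closedBall.eventually_iff.1 hlim
  lift R to ℝ≥0 using hr₀.trans hr.le
  lift r to ℝ≥0 using hr₀
  lift ε to ℝ≥0 using hε.le
  refine tendstoUniformlyOn_closedBall_of_tendsto_on_sphere hF hf hbound (ρ := min ε R)
    (lt_min hε (pos_of_gt hr)) (min_le_right _ _)
    (fun z hz => hεlim (sphere_subset_closedBall.trans ?_ hz)) hr
  exact closedBall_subset_closedBall (by exact_mod_cast min_le_left ε R)

theorem IsPreconnected.tendstoLocallyUniformlyOn_of_eventually_tendsto [l.IsCountablyGenerated]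
    [l.NeBot] {Ω : Set ℂ} {C : ℝ} {z₀ : ℂ} (hΩc : IsPreconnected Ω) (hΩ : IsOpen Ω)
    (hF : ∀ n, DifferentiableOn ℂ (F n) Ω) (hf : DifferentiableOn ℂ f Ω)
    (hbound : ∀ n, ∀ z ∈ Ω, ‖F n z‖ ≤ C) (hz₀ : z₀ ∈ Ω)
    (hlim : ∀ᶠ z in 𝓝 z₀, Tendsto (F · z) l (𝓝 (f z))) :
    TendstoLocallyUniformlyOn F f l Ω := by
  have hdisc {b : ℂ} {r R : ℝ} (hsub : closedBall b R ⊆ Ω)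
      (hb : ∀ᶠ z in 𝓝 b, Tendsto (F · z) l (𝓝 (f z))) (hr₀ : 0 ≤ r) (hr : r < R) :
      TendstoUniformlyOn F f l (closedBall b r) :=
    tendstoUniformlyOn_closedBall_of_eventually_tendsto (fun n => (hF n).mono hsub)
      (hf.mono hsub) (fun n z hz => hbound n z (hsub hz)) hb hr₀ hr
  have hΩS : Ω ⊆ {z | ∀ᶠ w in 𝓝 z, Tendsto (F · w) l (𝓝 (f w))} := by
    refine hΩc.subset_of_closure_inter_subset isOpen_setOfPred_eventually_nhds ⟨z₀, hz₀, hlim⟩ ?_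
    rintro a ⟨ha, haΩ⟩
    obtain ⟨R, hR, hRsub⟩ := nhds_basis_closedBall.mem_iff.1 (hΩ.mem_nhds haΩ)
    obtain ⟨b, hab, hb⟩ := mem_closure_iff.1 ha _ isOpen_ball (mem_ball_self (half_pos hR))
    have hba : dist a b < R / 2 := mem_ball'.1 hab
    have hbsub : closedBall b (R / 2) ⊆ Ω :=
      (closedBall_subset_closedBall' (by rw [dist_comm]; linarith)).trans hRsub
    obtain ⟨r, har, hrR⟩ := exists_between hba
    exact mem_of_superset (closedBall_mem_nhds_of_mem (mem_ball.2 har))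
      fun w hw => (hdisc hbsub hb (dist_nonneg.trans har.le) hrR).tendsto_at hw
  refine tendstoLocallyUniformlyOn_of_forall_exists_nhds fun x hx => ?_
  obtain ⟨R, hR, hRsub⟩ := nhds_basis_closedBall.mem_iff.1 (hΩ.mem_nhds hx)
  exact ⟨closedBall x (R / 2), mem_nhdsWithin_of_mem_nhds (closedBall_mem_nhds x (half_pos hR)),
    hdisc hRsub (hΩS hx) (half_pos hR).le (half_lt_self hR)⟩

end CauchyPowerSeries

theorem uniformly_bounded_pointwise_limit_tendstoUniformlyOn_general
    (Ω : Set ℂ) (hΩopen : IsOpen Ω) (hΩconn : IsConnected Ω)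
    (f : ℂ → ℂ) (F : ℕ → ℂ → ℂ)
    (hf : DifferentiableOn ℂ f Ω) (hF : ∀ n, DifferentiableOn ℂ (F n) Ω)
    (C : ℝ) (hbound : ∀ n, ∀ z ∈ Ω, ‖F n z‖ ≤ C)
    (Ω' : Set ℂ) (hΩ'open : IsOpen Ω') (hΩ'ne : Ω'.Nonempty) (hΩ'sub : Ω' ⊆ Ω)
    (hconv : ∀ z ∈ Ω', Tendsto (fun n => F n z) atTop (nhds (f z))) :
    ∀ K : Set ℂ, K ⊆ Ω → IsCompact K → TendstoUniformlyOn F f atTop K := by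
  obtain ⟨z₀, hz₀⟩ := hΩ'ne
  have hloc : TendstoLocallyUniformlyOn F f atTop Ω :=
    hΩconn.isPreconnected.tendstoLocallyUniformlyOn_of_eventually_tendsto hΩopen hF hf hbound
      (hΩ'sub hz₀) (eventually_of_mem (hΩ'open.mem_nhds hz₀) hconv)
  exact (tendstoLocallyUniformlyOn_iff_forall_isCompact hΩopen).1 hloc

/-- **Montel-type convergence lemma.** If a sequence of holomorphic functions on a connected
open set `Ω ⊆ ℂ` is uniformly bounded on `Ω` and converges pointwise to a holomorphic function
`f` on some nonempty open subset `Ω' ⊆ Ω`, then it converges to `f` uniformly on every compact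
subset of `Ω`. -/
theorem uniformly_bounded_pointwise_limit_tendstoUniformlyOn
    (Ω : Set ℂ) (hΩopen : IsOpen Ω) (hΩconn : IsConnected Ω)
    (f : ℂ → ℂ) (F : ℕ → ℂ → ℂ)
    (hf : DifferentiableOn ℂ f Ω) (hF : ∀ n, DifferentiableOn ℂ (F n) Ω)
    (C : ℝ) (hC : 0 < C) (hbound : ∀ n, ∀ z ∈ Ω, ‖F n z‖ ≤ C)
    (Ω' : Set ℂ) (hΩ'open : IsOpen Ω') (hΩ'ne : Ω'.Nonempty) (hΩ'sub : Ω' ⊆ Ω)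
    (hconv : ∀ z ∈ Ω', Tendsto (fun n => F n z) atTop (nhds (f z))) :
    ∀ K : Set ℂ, K ⊆ Ω → IsCompact K → TendstoUniformlyOn F f atTop K :=
  uniformly_bounded_pointwise_limit_tendstoUniformlyOn_general Ω hΩopen hΩconn f F hf hF C hbound Ω'
    hΩ'open hΩ'ne hΩ'sub hconv
end

section
/- Let n ≥ 1 be an integer and let A : 𝔻* → SL₂(ℂ) be a family of matrices whose four entries are holomorphic on 𝔻* and meromorphic at 0, such that the trace z ↦ tr(A(z)) has a pole of order exactly n at 0. Then lim_{z→0} ℓ(A(z)) / (2n·log(1/|z|)) = 1, where ℓ(A) := 2·log(spectral radius of A). (This is Lemma 3.2 on the convergence of lengths: ℓ(γ_z)/log(1/|z|) → ℓ^{na}(γ) = 2n, since |tr(γ)|_{na} = e^n = e^{ℓ^{na}(γ)/2}.) -/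
noncomputable section

/-- The spectral radius of a `2×2` complex matrix: the largest absolute value of an
eigenvalue. -/
def spectralRadC (A : Matrix (Fin 2) (Fin 2) ℂ) : ℝ :=
  sSup {r : ℝ | ∃ μ ∈ spectrum ℂ A, r = ‖μ‖}

/-- The (translation) length `ℓ(A) = 2 log(spectral radius of A)`. -/
def matLength (A : Matrix (Fin 2) (Fin 2) ℂ) : ℝ := 2 * Real.log (spectralRadC A)

lemma mem_spectrum_iff_quad (M : Matrix (Fin 2) (Fin 2) ℂ) (hdet : M.det = 1) (μ : ℂ) :
    μ ∈ spectrum ℂ M ↔ μ ^ 2 - M.trace * μ + 1 = 0 := by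
  rw [spectrum.mem_iff, Matrix.isUnit_iff_isUnit_det, isUnit_iff_ne_zero, not_not]
  have : ((algebraMap ℂ (Matrix (Fin 2) (Fin 2) ℂ)) μ - M).det
      = μ ^ 2 - M.trace * μ + M.det := by
    simp [Matrix.det_fin_two, Matrix.trace_fin_two, Matrix.algebraMap_eq_diagonal,
      Matrix.diagonal, Matrix.sub_apply]
    ring
  rw [this, hdet]

lemma quad_norm_le (t μ : ℂ) (h : μ ^ 2 - t * μ + 1 = 0) : ‖μ‖ ≤ ‖t‖ + 1 := by
  have h2 : μ ^ 2 = t * μ - 1 := by linear_combination h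
  have hb : ‖μ‖ ^ 2 ≤ ‖t‖ * ‖μ‖ + 1 := by
    calc ‖μ‖ ^ 2 = ‖μ ^ 2‖ := by rw [norm_pow]
    _ = ‖t * μ - 1‖ := by rw [h2]
    _ ≤ ‖t * μ‖ + ‖(1:ℂ)‖ := norm_sub_le _ _
    _ = ‖t‖ * ‖μ‖ + 1 := by rw [norm_mul, norm_one]
  nlinarith [norm_nonneg μ, norm_nonneg t]

lemma specRad_bounds (M : Matrix (Fin 2) (Fin 2) ℂ) (hdet : M.det = 1) :
    ‖M.trace‖ / 2 ≤ spectralRadC M ∧ spectralRadC M ≤ ‖M.trace‖ + 1 := by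
  set t := M.trace with ht
  obtain ⟨w, hw⟩ := IsAlgClosed.exists_pow_nat_eq (k := ℂ) (t ^ 2 - 4) (n := 2) (by norm_num)
  set lam := (t + w) / 2 with hlam
  set mu := (t - w) / 2 with hmu
  have hl : lam ^ 2 - t * lam + 1 = 0 := by
    rw [hlam]; linear_combination hw / 4
  have hm : mu ^ 2 - t * mu + 1 = 0 := by
    rw [hmu]; linear_combination hw / 4
  have hsum : lam + mu = t := by rw [hlam, hmu]; ring
  have hBdd : BddAbove {r : ℝ | ∃ μ ∈ spectrum ℂ M, r = ‖μ‖} := by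
    refine ⟨‖t‖ + 1, ?_⟩
    rintro r ⟨ν, hν, rfl⟩
    exact quad_norm_le t ν ((mem_spectrum_iff_quad M hdet ν).1 hν)
  constructor
  · have hmax : ‖t‖ / 2 ≤ ‖lam‖ ∨ ‖t‖ / 2 ≤ ‖mu‖ := by
      by_contra hc
      push_neg at hc
      have := norm_add_le lam mu
      rw [hsum] at this
      linarith [hc.1, hc.2]
    rcases hmax with h | h
    · exact h.trans (le_csSup hBdd ⟨lam, (mem_spectrum_iff_quad M hdet lam).2 hl, rfl⟩)
    · exact h.trans (le_csSup hBdd ⟨mu, (mem_spectrum_iff_quad M hdet mu).2 hm, rfl⟩)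
  · refine Real.sSup_le ?_ (by positivity)
    rintro r ⟨ν, hν, rfl⟩
    exact quad_norm_le t ν ((mem_spectrum_iff_quad M hdet ν).1 hν)

/-- **Lemma 3.2** (convergence of lengths): for a meromorphically degenerating family
`A : 𝔻* → SL₂(ℂ)` whose trace has a pole of order exactly `n` at `0`, one has
`ℓ(A(z)) / (2 n log(1/|z|)) → 1` as `z → 0`. -/
theorem length_asymptotics_of_degenerating_family
    (n : ℕ) (hn : 1 ≤ n) (A : ℂ → Matrix (Fin 2) (Fin 2) ℂ)
    (hdet : ∀ z ∈ Metric.ball (0 : ℂ) 1 \ {0}, (A z).det = 1)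
    (hent : ∀ i j : Fin 2, ∃ (N : ℕ) (g : ℂ → ℂ),
      DifferentiableOn ℂ g (Metric.ball 0 1) ∧
      ∀ z ∈ Metric.ball (0 : ℂ) 1 \ {0}, A z i j = g z / z ^ N)
    (gtr : ℂ → ℂ) (hgtr : DifferentiableOn ℂ gtr (Metric.ball 0 1)) (hgtr0 : gtr 0 ≠ 0)
    (htr : ∀ z ∈ Metric.ball (0 : ℂ) 1 \ {0}, (A z).trace = gtr z / z ^ n) :
    Filter.Tendsto (fun z : ℂ => matLength (A z) / (2 * n * Real.log (1 / ‖z‖)))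
      (nhdsWithin 0 {0}ᶜ) (nhds 1) := by
  set l := nhdsWithin (0:ℂ) {0}ᶜ with hl
  set L : ℂ → ℝ := fun z => Real.log (1 / ‖z‖) with hLdef
  -- ‖z‖ → 0 within positives
  have hnorm : Filter.Tendsto (fun z : ℂ => ‖z‖) l (nhdsWithin 0 (Set.Ioi 0)) := by
    rw [tendsto_nhdsWithin_iff]
    constructor
    · exact tendsto_norm_zero.mono_left nhdsWithin_le_nhds
    · filter_upwards [self_mem_nhdsWithin] with z hz
      exact norm_pos_iff.2 hz
  -- L → atTop
  have hLtop : Filter.Tendsto L l Filter.atTop := by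
    have : L = (fun x : ℝ => -Real.log x) ∘ (fun z : ℂ => ‖z‖) := by
      funext z; simp [hLdef, Real.log_div one_ne_zero, Real.log_inv, one_div]
    rw [this]
    have h1 : Filter.Tendsto (fun z : ℂ => Real.log ‖z‖) l Filter.atBot :=
      Real.tendsto_log_nhdsGT_zero.comp hnorm
    exact Filter.tendsto_neg_atBot_atTop.comp h1
  -- continuity of gtr at 0
  have hc : ContinuousAt gtr 0 :=
    hgtr.continuousOn.continuousAt (Metric.ball_mem_nhds _ one_pos)
  set a := ‖gtr 0‖ with ha
  have ha0 : 0 < a := norm_pos_iff.2 hgtr0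
  have hgn : Filter.Tendsto (fun z => ‖gtr z‖) l (nhds a) :=
    (hc.tendsto.norm).mono_left nhdsWithin_le_nhds
  have hev_g : ∀ᶠ z in l, a / 2 ≤ ‖gtr z‖ ∧ ‖gtr z‖ ≤ a + 1 := by
    have hmem : Set.Icc (a/2) (a+1) ∈ nhds a := Icc_mem_nhds (by linarith) (by linarith)
    filter_upwards [hgn.eventually_mem hmem] with z hz
    exact ⟨hz.1, hz.2⟩
  have hev_ball : ∀ᶠ z in l, z ∈ Metric.ball (0:ℂ) 1 \ {0} := by
    have h1 : ∀ᶠ z in l, z ∈ Metric.ball (0:ℂ) 1 :=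
      nhdsWithin_le_nhds (Metric.ball_mem_nhds _ one_pos)
    filter_upwards [h1, self_mem_nhdsWithin] with z h1 h2
    exact ⟨h1, h2⟩
  have hev_small : ∀ᶠ z in l, ‖z‖ ^ n ≤ a / 4 := by
    have : ∀ᶠ z in l, ‖z‖ < min 1 (a/4) := by
      apply nhdsWithin_le_nhds
      have := Metric.ball_mem_nhds (0:ℂ) (ε := min 1 (a/4)) (lt_min one_pos (by linarith))
      filter_upwards [this] with z hz
      rw [Metric.mem_ball, dist_zero_right] at hz
      exact hz
    filter_upwards [this] with z hz
    rw [lt_min_iff] at hz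
    calc ‖z‖ ^ n ≤ ‖z‖ := pow_le_of_le_one (norm_nonneg z)
          (le_of_lt hz.1) (by omega)
    _ ≤ a / 4 := le_of_lt hz.2
  set C0 := |Real.log (a/2)| + |Real.log (a+1)| with hC0
  set C := 2 * (Real.log 2 + C0) with hC
  -- the key eventual bound
  have hkey : ∀ᶠ z in l, |matLength (A z) - 2 * n * L z| ≤ C := by
    filter_upwards [hev_g, hev_ball, hev_small] with z hg hb hs
    have hz0 : z ≠ 0 := hb.2
    have hzn : ‖z‖ ^ n ≠ 0 := pow_ne_zero _ (norm_ne_zero_iff.2 hz0)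
    have hzn' : 0 < ‖z‖ ^ n := lt_of_le_of_ne (by positivity) (Ne.symm hzn)
    set t := (A z).trace with htdef
    have htval : t = gtr z / z ^ n := htr z hb
    have htn : ‖t‖ = ‖gtr z‖ / ‖z‖ ^ n := by
      rw [htval, norm_div, norm_pow]
    have hgz0 : ‖gtr z‖ ≠ 0 := by linarith [hg.1]
    have ht2 : 2 ≤ ‖t‖ := by
      rw [htn]
      rw [le_div_iff₀ hzn']
      calc 2 * ‖z‖ ^ n ≤ 2 * (a/4) := by nlinarith [hs]
      _ = a / 2 := by ring
      _ ≤ ‖gtr z‖ := hg.1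
    obtain ⟨hlow, hhigh⟩ := specRad_bounds (A z) (hdet z hb)
    rw [← htdef] at hlow hhigh
    have hρpos : 0 < spectralRadC (A z) := lt_of_lt_of_le (by linarith) hlow
    -- log bounds
    have hlog_low : Real.log ‖t‖ - Real.log 2 ≤ Real.log (spectralRadC (A z)) := by
      have := Real.log_le_log (by linarith) hlow
      rwa [Real.log_div (by linarith) two_ne_zero] at this
    have hlog_high : Real.log (spectralRadC (A z)) ≤ Real.log 2 + Real.log ‖t‖ := by
      have h1 : spectralRadC (A z) ≤ 2 * ‖t‖ := by linarith
      have := Real.log_le_log hρpos h1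
      rwa [Real.log_mul two_ne_zero (by linarith)] at this
    -- log ‖t‖ = log ‖gtr z‖ + n * L z
    have hlogt : Real.log ‖t‖ = Real.log ‖gtr z‖ + n * L z := by
      rw [htn, Real.log_div hgz0 hzn, Real.log_pow]
      have : L z = -Real.log ‖z‖ := by
        simp [hLdef, Real.log_div one_ne_zero, Real.log_inv, one_div]
      rw [this]; ring
    have hgb : |Real.log ‖gtr z‖| ≤ C0 := by
      have h1 : Real.log (a/2) ≤ Real.log ‖gtr z‖ := Real.log_le_log (by linarith) hg.1
      have h2 : Real.log ‖gtr z‖ ≤ Real.log (a+1) := Real.log_le_log (by linarith) hg.2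
      rw [abs_le]
      constructor
      · have := neg_abs_le (Real.log (a/2))
        have h3 := abs_nonneg (Real.log (a+1))
        simp only [hC0]; linarith
      · have := le_abs_self (Real.log (a+1))
        have h3 := abs_nonneg (Real.log (a/2))
        simp only [hC0]; linarith
    rw [abs_le]
    simp only [matLength]
    constructor
    · rw [hC]
      have := neg_abs_le (Real.log ‖gtr z‖)
      linarith [hlog_low, hlogt]
    · rw [hC]
      have := le_abs_self (Real.log ‖gtr z‖)
      linarith [hlog_high, hlogt]
  -- eventually L z > 0
  have hLpos : ∀ᶠ z in l, 0 < L z := hLtop.eventually_gt_atTop 0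
  have hnpos : (0:ℝ) < 2 * n := by
    have : (1:ℝ) ≤ n := by exact_mod_cast hn
    linarith
  -- error term → 0
  have herr : Filter.Tendsto (fun z => (matLength (A z) - 2 * n * L z) / (2 * n * L z)) l
      (nhds 0) := by
    have hCg : Filter.Tendsto (fun z => C / (2 * n * L z)) l (nhds 0) :=
      Filter.Tendsto.div_atTop tendsto_const_nhds (hLtop.const_mul_atTop hnpos)
    apply squeeze_zero_norm' _ hCg
    filter_upwards [hkey, hLpos] with z hk hp
    have hdp : (0:ℝ) < 2 * n * L z := mul_pos hnpos hp
    rw [Real.norm_eq_abs, abs_div, abs_of_pos hdp]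
    exact div_le_div_of_nonneg_right hk hdp.le
  have heq : ∀ᶠ z in l, 1 + (matLength (A z) - 2 * n * L z) / (2 * n * L z)
      = matLength (A z) / (2 * n * Real.log (1 / ‖z‖)) := by
    filter_upwards [hLpos] with z hp
    have hd : (2 * (n:ℝ) * Real.log (1 / ‖z‖)) ≠ 0 := ne_of_gt (mul_pos hnpos hp)
    show 1 + (matLength (A z) - 2 * (n:ℝ) * Real.log (1 / ‖z‖)) /
        (2 * (n:ℝ) * Real.log (1 / ‖z‖)) = _
    rw [sub_div, div_self hd]
    ring
  have := (tendsto_const_nhds.add herr : Filter.Tendsto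
    (fun z => 1 + (matLength (A z) - 2 * n * L z) / (2 * n * L z)) l (nhds (1 + 0)))
  rw [add_zero] at this
  exact this.congr' heq


end
end

section
/- Let c ∈ (0,1). There exists a constant C > 0 depending only on c with the following property. Let n ≥ 1 and let A : 𝔻* → SL₂(ℂ) be a family with entries holomorphic on 𝔻* and meromorphic at 0, such that A(z) is loxodromic for every z ∈ 𝔻*, the trace satisfies tr(A(z)) = z^{−n} f(z) with f holomorphic on 𝔻 and f(0) ≠ 0, and ℓ(A(z)) ≥ 2cn·log(1/|z|) for all 0 < |z| < c, where ℓ(A) := 2·log(spectral radius of A). Then the leading Laurent coefficient satisfies |f(0)| ≥ C^{−1} e^{−Cn}. (This is the lower bound of Proposition 4.2 on the leading coefficient A₀(γ) of the Laurent expansion of tr(γ_z), with ℓ^{na}(γ) = 2n.) -/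
noncomputable section

/-- A matrix is loxodromic if its two eigenvalues have distinct absolute values. -/
def IsLoxodromic (A : Matrix (Fin 2) (Fin 2) ℂ) : Prop :=
  ∃ μ ∈ spectrum ℂ A, ∃ ν ∈ spectrum ℂ A, ‖μ‖ ≠ ‖ν‖

/-!
At each `z ≠ 0` the trace of `A z` is `μ + μ⁻¹`, where `μ` is the eigenvalue of modulus
`spectralRadC (A z) > 1`, so `f z = z ^ n (μ + μ⁻¹)` has no zero in the unit disc. On the circle
`‖z‖ = c / 2` the length bound gives `‖μ‖ ≥ exp s` with `s = c n log (2 / c)`, hence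
`‖f z‖ ≥ (exp s - exp (-s)) (c / 2) ^ n`. The minimum modulus principle carries this lower bound
to `‖f 0‖`, and it is of the form `C⁻¹ exp (-C n)` with `C` depending only on `c`.
-/

open Metric

namespace Matrix

variable {A : Matrix (Fin 2) (Fin 2) ℂ} {μ : ℂ}

theorem mem_spectrum_fin_two_iff : μ ∈ spectrum ℂ A ↔ μ ^ 2 - A.trace * μ + A.det = 0 := by
  have hchar : (algebraMap ℂ _ μ - A).det = μ ^ 2 - A.trace * μ + A.det := by
    simp only [det_fin_two, trace_fin_two, sub_apply, algebraMap_matrix_apply, ↓reduceIte,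
      Algebra.algebraMap_self, RingHom.id_apply, Fin.isValue, zero_ne_one, one_ne_zero]
    ring
  rw [spectrum.mem_iff, isUnit_iff_isUnit_det, isUnit_iff_ne_zero, not_not, hchar]

theorem ne_zero_of_mem_spectrum_of_det_eq_one (hdet : A.det = 1) (hμ : μ ∈ spectrum ℂ A) :
    μ ≠ 0 := by
  rintro rfl
  simp [mem_spectrum_fin_two_iff, hdet] at hμ

theorem trace_eq_add_inv_of_mem_spectrum (hdet : A.det = 1) (hμ : μ ∈ spectrum ℂ A) :
    A.trace = μ + μ⁻¹ := by
  have hμ0 := ne_zero_of_mem_spectrum_of_det_eq_one hdet hμ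
  rw [mem_spectrum_fin_two_iff, hdet] at hμ
  field_simp
  linear_combination -hμ

theorem spectrum_eq_pair_inv (hdet : A.det = 1) (hμ : μ ∈ spectrum ℂ A) :
    spectrum ℂ A = {μ, μ⁻¹} := by
  have hinv : μ * μ⁻¹ = 1 := mul_inv_cancel₀ (ne_zero_of_mem_spectrum_of_det_eq_one hdet hμ)
  ext x
  have hfactor : x ^ 2 - (μ + μ⁻¹) * x + 1 = (x - μ) * (x - μ⁻¹) := by
    linear_combination -hinv
  rw [mem_spectrum_fin_two_iff, hdet, trace_eq_add_inv_of_mem_spectrum hdet hμ, hfactor,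
    mul_eq_zero, sub_eq_zero, sub_eq_zero, Set.mem_insert_iff, Set.mem_singleton_iff]

end Matrix

theorem spectralRadC_eq_of_spectrum_eq_pair_inv {A : Matrix (Fin 2) (Fin 2) ℂ} {μ : ℂ}
    (hA : spectrum ℂ A = {μ, μ⁻¹}) (hμ : 1 ≤ ‖μ‖) : spectralRadC A = ‖μ‖ := by
  have hset : {r : ℝ | ∃ ν ∈ spectrum ℂ A, r = ‖ν‖} = {‖μ‖, ‖μ‖⁻¹} := by
    ext r
    simp [hA, eq_comm]
  rw [spectralRadC, hset, csSup_pair, max_eq_left]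
  exact (inv_le_one_of_one_le₀ hμ).trans hμ

theorem Complex.sub_inv_le_norm_add_inv {μ : ℂ} {t : ℝ} (ht : 0 < t) (h : t ≤ ‖μ‖) :
    t - t⁻¹ ≤ ‖μ + μ⁻¹‖ :=
  calc t - t⁻¹ ≤ ‖μ‖ - ‖μ⁻¹‖ := by
        rw [norm_inv]
        exact sub_le_sub h (inv_anti₀ ht h)
    _ ≤ ‖μ + μ⁻¹‖ := norm_sub_le_norm_add μ μ⁻¹

namespace IsLoxodromic

variable {A : Matrix (Fin 2) (Fin 2) ℂ}

theorem exists_spectrum_eq_pair_inv (hdet : A.det = 1) (hA : IsLoxodromic A) :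
    ∃ μ : ℂ, 1 < ‖μ‖ ∧ spectrum ℂ A = {μ, μ⁻¹} := by
  obtain ⟨μ, hμ, ν, hν, hne⟩ := hA
  have hspec := Matrix.spectrum_eq_pair_inv hdet hμ
  have hμ1 : ‖μ‖ ≠ 1 := by
    intro h
    rw [hspec] at hν
    rcases hν with rfl | rfl <;> simp_all
  rcases hμ1.lt_or_gt with h | h
  · refine ⟨μ⁻¹, ?_, by rw [hspec, inv_inv, Set.pair_comm]⟩
    rw [norm_inv]
    exact (one_lt_inv₀ (norm_pos_iff.2 (Matrix.ne_zero_of_mem_spectrum_of_det_eq_one hdet hμ))).2 h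
  · exact ⟨μ, h, hspec⟩

theorem exists_trace_eq_add_inv (hdet : A.det = 1) (hA : IsLoxodromic A) :
    ∃ μ : ℂ, 1 < ‖μ‖ ∧ A.trace = μ + μ⁻¹ ∧ spectralRadC A = ‖μ‖ := by
  obtain ⟨μ, hμ1, hspec⟩ := hA.exists_spectrum_eq_pair_inv hdet
  have hμ : μ ∈ spectrum ℂ A := hspec ▸ Set.mem_insert μ _
  exact ⟨μ, hμ1, Matrix.trace_eq_add_inv_of_mem_spectrum hdet hμ,
    spectralRadC_eq_of_spectrum_eq_pair_inv hspec hμ1.le⟩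

theorem trace_ne_zero (hdet : A.det = 1) (hA : IsLoxodromic A) : A.trace ≠ 0 := by
  obtain ⟨μ, hμ1, htr, -⟩ := hA.exists_trace_eq_add_inv hdet
  have hpos : 0 < ‖μ‖ - ‖μ‖⁻¹ := sub_pos.2 ((inv_lt_one_of_one_lt₀ hμ1).trans hμ1)
  rw [← norm_pos_iff, htr]
  exact hpos.trans_le (Complex.sub_inv_le_norm_add_inv (zero_lt_one.trans hμ1) le_rfl)

theorem exp_sub_exp_neg_le_norm_trace (hdet : A.det = 1) (hA : IsLoxodromic A) {s : ℝ}
    (hs : 2 * s ≤ matLength A) : Real.exp s - Real.exp (-s) ≤ ‖A.trace‖ := by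
  obtain ⟨μ, hμ1, htr, hrad⟩ := hA.exists_trace_eq_add_inv hdet
  have hexp : Real.exp s ≤ ‖μ‖ := by
    rw [← Real.le_log_iff_exp_le (zero_lt_one.trans hμ1)]
    rw [matLength, hrad] at hs
    linarith
  rw [Real.exp_neg, htr]
  exact Complex.sub_inv_le_norm_add_inv (Real.exp_pos s) hexp

end IsLoxodromic

theorem Complex.le_norm_of_forall_mem_frontier_le_norm {E : Type*} [NormedAddCommGroup E]
    [NormedSpace ℂ E] [Nontrivial E] {f : E → ℂ} {U : Set E} (hU : Bornology.IsBounded U)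
    (hd : DiffContOnCl ℂ f U) (h₀ : ∀ z ∈ closure U, f z ≠ 0) {m : ℝ}
    (hm : ∀ z ∈ frontier U, m ≤ ‖f z‖) {z : E} (hz : z ∈ closure U) : m ≤ ‖f z‖ := by
  rcases le_or_gt m 0 with hm0 | hm0
  · exact hm0.trans (norm_nonneg _)
  have hinv : ‖(f z)⁻¹‖ ≤ m⁻¹ := by
    refine Complex.norm_le_of_forall_mem_frontier_norm_le hU (hd.inv h₀) (fun w hw => ?_) hz
    rw [Pi.inv_apply, norm_inv]
    exact inv_anti₀ hm0 (hm w hw)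
  rwa [norm_inv, inv_le_inv₀ (norm_pos_iff.2 (h₀ z hz)) hm0] at hinv

theorem Complex.le_norm_of_forall_mem_sphere_le_norm {f : ℂ → ℂ} {a : ℂ} {r R m : ℝ}
    (hr : 0 < r) (hrR : r < R) (hf : DifferentiableOn ℂ f (ball a R))
    (h₀ : ∀ z ∈ ball a R, f z ≠ 0) (hm : ∀ z ∈ sphere a r, m ≤ ‖f z‖) : m ≤ ‖f a‖ := by
  have hclosure : closure (ball a r) ⊆ ball a R := by
    rw [closure_ball _ hr.ne']
    exact closedBall_subset_ball hrR
  exact Complex.le_norm_of_forall_mem_frontier_le_norm isBounded_ball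
    (hf.mono hclosure).diffContOnCl (fun z hz => h₀ z (hclosure hz))
    (by rwa [frontier_ball _ hr.ne']) (subset_closure (mem_ball_self hr))

theorem exists_pos_inv_mul_exp_neg_le_mul_pow {a r : ℝ} (ha : 0 < a) (hr : 0 < r) :
    ∃ C : ℝ, 0 < C ∧ ∀ n : ℕ, 1 ≤ n →
      C⁻¹ * Real.exp (-C * n) ≤ (Real.exp (a * n) - Real.exp (-(a * n))) * r ^ n := by
  set δ := 1 - Real.exp (-(2 * a))
  have hδ : 0 < δ := sub_pos.2 (Real.exp_lt_one_iff.2 (by linarith))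
  set b := -Real.log r
  set C := max (b - a) δ⁻¹
  refine ⟨C, lt_max_of_lt_right (inv_pos.2 hδ), fun n hn => ?_⟩
  have hn' : (1 : ℝ) ≤ n := by exact_mod_cast hn
  calc C⁻¹ * Real.exp (-C * n) ≤ δ * Real.exp (-((b - a) * n)) := by
        refine mul_le_mul (inv_le_of_inv_le₀ hδ (le_max_right _ _)) ?_ (Real.exp_pos _).le hδ.le
        exact Real.exp_le_exp.2 (by nlinarith [le_max_left (b - a) δ⁻¹])
    _ ≤ (1 - Real.exp (-(2 * a * n))) * Real.exp (-((b - a) * n)) := by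
        gcongr
        exact sub_le_sub_left (Real.exp_le_exp.2 (by nlinarith)) 1
    _ = (Real.exp (a * n) - Real.exp (-(a * n))) * r ^ n := by
        rw [← Real.exp_log hr, ← Real.exp_nat_mul]
        simp only [b, sub_mul, one_mul, ← Real.exp_add]
        ring_nf

/-- **Lower bound of Proposition 4.2** on the leading Laurent coefficient of the trace of a
degenerating loxodromic family. -/
theorem leading_coefficient_lower_bound :
    ∀ c ∈ Set.Ioo (0 : ℝ) 1, ∃ C : ℝ, 0 < C ∧
      ∀ n : ℕ, 1 ≤ n → ∀ A : ℂ → Matrix (Fin 2) (Fin 2) ℂ, ∀ f : ℂ → ℂ,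
        (∀ z ∈ Metric.ball (0 : ℂ) 1 \ {0}, (A z).det = 1) →
        (∀ i j : Fin 2, ∃ (N : ℕ) (g : ℂ → ℂ),
          DifferentiableOn ℂ g (Metric.ball 0 1) ∧
          ∀ z ∈ Metric.ball (0 : ℂ) 1 \ {0}, A z i j = g z / z ^ N) →
        (∀ z ∈ Metric.ball (0 : ℂ) 1 \ {0}, IsLoxodromic (A z)) →
        DifferentiableOn ℂ f (Metric.ball 0 1) → f 0 ≠ 0 →
        (∀ z ∈ Metric.ball (0 : ℂ) 1 \ {0}, (A z).trace = f z / z ^ n) →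
        (∀ z : ℂ, 0 < ‖z‖ → ‖z‖ < c →
          2 * c * n * Real.log (1 / ‖z‖) ≤ matLength (A z)) →
        C⁻¹ * Real.exp (-C * n) ≤ ‖f 0‖ := by
  rintro c ⟨hc0, hc1⟩
  set r := c / 2 with hr_def
  have hr : 0 < r := by positivity
  have hrc : r < c := by linarith
  set a := c * Real.log (1 / r) with ha_def
  have ha : 0 < a := mul_pos hc0 (Real.log_pos (by rw [lt_one_div one_pos hr]; linarith))
  obtain ⟨C, hC, hCbound⟩ := exists_pos_inv_mul_exp_neg_le_mul_pow ha hr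
  refine ⟨C, hC, fun n hn A f hdet _ hlox hf hf0 htr hlen => ?_⟩
  have hfz : ∀ z ∈ ball 0 1 \ {0}, f z = (A z).trace * z ^ n := fun z hz => by
    rw [htr z hz, div_mul_cancel₀ _ (pow_ne_zero _ hz.2)]
  have hf_ne : ∀ z ∈ ball (0 : ℂ) 1, f z ≠ 0 := by
    intro z hz
    rcases eq_or_ne z 0 with rfl | hz0
    · exact hf0
    rw [hfz z ⟨hz, hz0⟩]
    exact mul_ne_zero ((hlox z ⟨hz, hz0⟩).trace_ne_zero (hdet z ⟨hz, hz0⟩)) (pow_ne_zero _ hz0)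
  have hsphere : ∀ z ∈ sphere (0 : ℂ) r,
      (Real.exp (a * n) - Real.exp (-(a * n))) * r ^ n ≤ ‖f z‖ := by
    intro z hz
    rw [mem_sphere_zero_iff_norm] at hz
    have hz' : z ∈ ball 0 1 \ {0} :=
      ⟨by rw [mem_ball_zero_iff, hz]; linarith, norm_ne_zero_iff.1 (hz ▸ hr.ne')⟩
    have hlen' := hlen z (hz ▸ hr) (hz ▸ hrc)
    rw [hz] at hlen'
    rw [hfz z hz', norm_mul, norm_pow, hz]
    gcongr
    exact (hlox z hz').exp_sub_exp_neg_le_norm_trace (hdet z hz') (by rw [ha_def]; linarith)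
  exact (hCbound n hn).trans
    (Complex.le_norm_of_forall_mem_sphere_le_norm hr (by linarith) hf hf_ne hsphere)

end
end

section
/- Let ε ∈ (0,1] and equip ℂ with the norm |w| := |w|_∞^ε, where |·|_∞ is the usual absolute value; write D⁺(α,ρ) := {z ∈ ℂ : |z−α| ≤ ρ} for the corresponding closed disc. Let a,b,c,d ∈ ℂ with c ≠ 0 and ad−bc ≠ 0, let γ(z) = (az+b)/(cz+d), and let α ∈ ℂ and ρ > 0 satisfy |α + d/c| > ρ. Then γ maps D⁺(α,ρ) bijectively onto the closed disc D⁺(w₀, r₀) with center w₀ = a/c − ((ad−bc)/c²)·(conjugate of (α+d/c))/(|α+d/c|^{2/ε} − ρ^{2/ε}) and radius r₀ = |ad−bc|·ρ / (|c|²·(|α+d/c|^{2/ε} − ρ^{2/ε})^{ε}), where all norms |·| are the ε-norm. (This is the Archimedean case of Lemma 2.12 describing the image of a disc under a Möbius transformation.) -/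
/-!
Write `γ z = a/c - (ad - bc)/c² · (z + d/c)⁻¹`: on the disc, `γ` is a translation, then the
inversion `u ↦ u⁻¹`, then an affine map. The inversion sends the disc `|u - β| ≤ R` with
`R < |β|` onto the disc with center `conj β / D` and radius `R / D`, `D = |β|² - R²`, by the
identity `|conj β · u - D|² - R²|u|² = D (|u - β|² - R²)`.
Since `t ↦ t^ε` is increasing, the `ε`-discs are the usual discs with radius `ρ^(1/ε)`.
-/

open Complex ComplexConjugate Metric Set

lemma Complex.sq_norm_conj_mul_sub_sub (β u : ℂ) (R : ℝ) :
    ‖conj β * u - ((‖β‖ ^ 2 - R ^ 2 : ℝ) : ℂ)‖ ^ 2 - R ^ 2 * ‖u‖ ^ 2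
      = (‖β‖ ^ 2 - R ^ 2) * (‖u - β‖ ^ 2 - R ^ 2) := by
  simp only [Complex.sq_norm, normSq_apply, sub_re, sub_im, mul_re, mul_im, conj_re, conj_im,
    ofReal_re, ofReal_im]
  ring

lemma Complex.inv_mem_closedBall_iff {β : ℂ} {R : ℝ} (hR : 0 ≤ R) (hβ : R < ‖β‖) (u : ℂ) :
    u⁻¹ ∈ closedBall (conj β / ((‖β‖ ^ 2 - R ^ 2 : ℝ) : ℂ)) (R / (‖β‖ ^ 2 - R ^ 2))
      ↔ u ∈ closedBall β R := by
  have hid := sq_norm_conj_mul_sub_sub β u R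
  set D := ‖β‖ ^ 2 - R ^ 2
  have hD : 0 < D := by nlinarith
  rw [mem_closedBall, mem_closedBall, dist_eq_norm, dist_eq_norm]
  rcases eq_or_ne u 0 with rfl | hu
  · simp only [inv_zero, zero_sub, norm_neg, norm_div, RCLike.norm_conj, norm_real,
      Real.norm_of_nonneg hD.le]
    rw [div_le_div_iff_of_pos_right hD]
  have hDC : (D : ℂ) ≠ 0 := ofReal_ne_zero.mpr hD.ne'
  have hdiff : u⁻¹ - conj β / D = -(conj β * u - D) / (D * u) := by
    field_simp
    ring
  rw [hdiff, norm_div, norm_neg, norm_mul, norm_real, Real.norm_of_nonneg hD.le,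
    div_le_div_iff₀ (by positivity) hD, ← mul_assoc, mul_right_comm R, mul_le_mul_iff_left₀ hD,
    ← pow_le_pow_iff_left₀ (norm_nonneg _) (by positivity) two_ne_zero,
    ← pow_le_pow_iff_left₀ (norm_nonneg (u - β)) hR two_ne_zero]
  constructor <;> intro h <;> nlinarith

lemma Complex.bijOn_inv_closedBall {β : ℂ} {R : ℝ} (hR : 0 ≤ R) (hβ : R < ‖β‖) :
    BijOn Inv.inv (closedBall β R)
      (closedBall (conj β / ((‖β‖ ^ 2 - R ^ 2 : ℝ) : ℂ)) (R / (‖β‖ ^ 2 - R ^ 2))) :=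
  InvOn.bijOn ⟨fun u _ ↦ inv_inv u, fun v _ ↦ inv_inv v⟩
    (fun u hu ↦ (inv_mem_closedBall_iff hR hβ u).mpr hu)
    (fun v hv ↦ (inv_mem_closedBall_iff hR hβ v⁻¹).mp (by rwa [inv_inv]))

lemma bijOn_add_mul_closedBall {𝕜 : Type*} [NormedDivisionRing 𝕜] {q : 𝕜} (hq : q ≠ 0)
    (p x : 𝕜) (r : ℝ) :
    BijOn (fun v ↦ p + q * v) (closedBall x r) (closedBall (p + q * x) (‖q‖ * r)) := by
  have hmem : ∀ v, p + q * v ∈ closedBall (p + q * x) (‖q‖ * r) ↔ v ∈ closedBall x r := by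
    intro v
    rw [mem_closedBall, mem_closedBall, dist_eq_norm, dist_eq_norm, add_sub_add_left_eq_sub,
      ← mul_sub, norm_mul, mul_le_mul_iff_right₀ (norm_pos_iff.mpr hq)]
  refine InvOn.bijOn (f' := fun w ↦ q⁻¹ * (w - p)) ⟨fun v _ ↦ ?_, fun w _ ↦ ?_⟩
    (fun v hv ↦ (hmem v).mpr hv) (fun w hw ↦ (hmem _).mp ?_)
  · simp [inv_mul_cancel_left₀ hq]
  · simp [mul_inv_cancel_left₀ hq]
  · simpa [mul_inv_cancel_left₀ hq] using hw

lemma bijOn_add_const_closedBall {E : Type*} [SeminormedAddCommGroup E] (t x : E) (r : ℝ) :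
    BijOn (· + t) (closedBall x r) (closedBall (x + t) r) := by
  refine InvOn.bijOn (f' := (· - t)) ⟨fun v _ ↦ add_sub_cancel_right v t,
    fun w _ ↦ sub_add_cancel w t⟩ (fun v hv ↦ ?_) (fun w hw ↦ ?_)
  · simpa [mem_closedBall, dist_eq_norm] using hv
  · simpa [mem_closedBall, dist_eq_norm, sub_sub, add_comm] using hw

lemma moebius_eq_add_mul_inv {K : Type*} [Field K] {a b c d z : K} (hc : c ≠ 0)
    (hz : c * z + d ≠ 0) :
    (a * z + b) / (c * z + d) = a / c + -((a * d - b * c) / c ^ 2) * (z + d / c)⁻¹ := by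
  rw [show z + d / c = (c * z + d) / c by field_simp, inv_div, div_eq_iff hz, add_mul,
    mul_assoc, div_mul_cancel₀ _ hz]
  field_simp
  ring

theorem Complex.moebius_bijOn_closedBall {a b c d α : ℂ} {R : ℝ} (hc : c ≠ 0)
    (hdet : a * d - b * c ≠ 0) (hR : 0 ≤ R) (hsep : R < ‖α + d / c‖) :
    (∀ z ∈ closedBall α R, c * z + d ≠ 0) ∧
    BijOn (fun z ↦ (a * z + b) / (c * z + d)) (closedBall α R)
      (closedBall (a / c - (a * d - b * c) / c ^ 2 * conj (α + d / c) /
          ((‖α + d / c‖ ^ 2 - R ^ 2 : ℝ) : ℂ))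
        (‖a * d - b * c‖ * R / (‖c‖ ^ 2 * (‖α + d / c‖ ^ 2 - R ^ 2)))) := by
  have hpole : ∀ z ∈ closedBall α R, c * z + d ≠ 0 := by
    intro z hz hzero
    have : z - α = -(α + d / c) := by field_simp; linear_combination hzero
    rw [mem_closedBall, dist_eq_norm, this, norm_neg] at hz
    exact hz.not_gt hsep
  have hq : -((a * d - b * c) / c ^ 2) ≠ 0 := by simp [hc, hdet]
  have hγ := (bijOn_add_mul_closedBall hq (a / c) _ _).comp
    ((bijOn_inv_closedBall hR hsep).comp (bijOn_add_const_closedBall (d / c) α R))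
  have hcenter : a / c + -((a * d - b * c) / c ^ 2) *
        (conj (α + d / c) / ((‖α + d / c‖ ^ 2 - R ^ 2 : ℝ) : ℂ)) =
      a / c - (a * d - b * c) / c ^ 2 * conj (α + d / c) /
        ((‖α + d / c‖ ^ 2 - R ^ 2 : ℝ) : ℂ) := by ring
  have hradius : ‖-((a * d - b * c) / c ^ 2)‖ * (R / (‖α + d / c‖ ^ 2 - R ^ 2)) =
      ‖a * d - b * c‖ * R / (‖c‖ ^ 2 * (‖α + d / c‖ ^ 2 - R ^ 2)) := by
    rw [norm_neg, norm_div, norm_pow, div_mul_div_comm]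
  rw [hcenter, hradius] at hγ
  exact ⟨hpole, hγ.congr fun z hz ↦ (moebius_eq_add_mul_inv hc (hpole z hz)).symm⟩

lemma setOf_norm_sub_rpow_le_rpow {E : Type*} [SeminormedAddCommGroup E] {ε r : ℝ}
    (hε : 0 < ε) (hr : 0 ≤ r) (x : E) :
    {z : E | ‖z - x‖ ^ ε ≤ r ^ ε} = closedBall x r := by
  ext z
  rw [mem_ofPred_eq, mem_closedBall, dist_eq_norm, Real.rpow_le_rpow_iff (norm_nonneg _) hr hε]

lemma Real.rpow_rpow_two_div {x ε : ℝ} (hx : 0 ≤ x) (hε : ε ≠ 0) :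
    (x ^ ε) ^ (2 / ε) = x ^ 2 := by
  rw [← Real.rpow_mul hx, mul_div_cancel₀ _ hε, Real.rpow_two]

theorem moebius_image_of_disc_archimedean_general
    (ε : ℝ) (hε0 : 0 < ε) (a b c d α : ℂ) (ρ : ℝ) (hρ : 0 < ρ)
    (hc : c ≠ 0) (hdet : a * d - b * c ≠ 0)
    (hsep : ρ < ‖α + d / c‖ ^ ε) :
    (∀ z : ℂ, ‖z - α‖ ^ ε ≤ ρ → c * z + d ≠ 0) ∧
    Set.BijOn (fun z : ℂ => (a * z + b) / (c * z + d))
      {z : ℂ | ‖z - α‖ ^ ε ≤ ρ}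
      {w : ℂ | ‖w - (a / c - (a * d - b * c) / c ^ 2 * (starRingEnd ℂ) (α + d / c) /
            ((((‖α + d / c‖ ^ ε) ^ (2 / ε) - ρ ^ (2 / ε) : ℝ)) : ℂ))‖ ^ ε ≤
          (‖a * d - b * c‖ ^ ε) * ρ /
            ((‖c‖ ^ ε) ^ 2 * ((‖α + d / c‖ ^ ε) ^ (2 / ε) - ρ ^ (2 / ε)) ^ ε)} := by
  obtain ⟨R, hR, rfl⟩ : ∃ R, 0 < R ∧ ρ = R ^ ε :=
    ⟨ρ ^ ε⁻¹, by positivity, (Real.rpow_inv_rpow hρ.le hε0.ne').symm⟩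
  have hsep' : R < ‖α + d / c‖ := (Real.rpow_lt_rpow_iff hR.le (norm_nonneg _) hε0).mp hsep
  have hD : 0 < ‖α + d / c‖ ^ 2 - R ^ 2 := by nlinarith
  have hradius : ‖a * d - b * c‖ ^ ε * R ^ ε / ((‖c‖ ^ ε) ^ 2 * (‖α + d / c‖ ^ 2 - R ^ 2) ^ ε)
      = (‖a * d - b * c‖ * R / (‖c‖ ^ 2 * (‖α + d / c‖ ^ 2 - R ^ 2))) ^ ε := by
    rw [Real.rpow_pow_comm (norm_nonneg c), ← Real.mul_rpow (by positivity) hR.le,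
      ← Real.mul_rpow (by positivity) hD.le, ← Real.div_rpow (by positivity) (by positivity)]
  rw [Real.rpow_rpow_two_div (norm_nonneg _) hε0.ne', Real.rpow_rpow_two_div hR.le hε0.ne',
    hradius, setOf_norm_sub_rpow_le_rpow hε0 hR.le, setOf_norm_sub_rpow_le_rpow hε0 (by positivity)]
  obtain ⟨hpole, hbij⟩ := Complex.moebius_bijOn_closedBall (b := b) hc hdet hR.le hsep'
  refine ⟨fun z hz ↦ hpole z ?_, hbij⟩
  rwa [← setOf_norm_sub_rpow_le_rpow hε0 hR.le]

/-- **Archimedean case of Lemma 2.12**: the image of a closed disc (for the norm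
`|w| = |w|_∞^ε`) under a Möbius transformation is again a closed disc, with explicit
center and radius. -/
theorem moebius_image_of_disc_archimedean
    (ε : ℝ) (hε0 : 0 < ε) (hε1 : ε ≤ 1) (a b c d α : ℂ) (ρ : ℝ) (hρ : 0 < ρ)
    (hc : c ≠ 0) (hdet : a * d - b * c ≠ 0)
    (hsep : ρ < ‖α + d / c‖ ^ ε) :
    (∀ z : ℂ, ‖z - α‖ ^ ε ≤ ρ → c * z + d ≠ 0) ∧
    Set.BijOn (fun z : ℂ => (a * z + b) / (c * z + d))
      {z : ℂ | ‖z - α‖ ^ ε ≤ ρ}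
      {w : ℂ | ‖w - (a / c - (a * d - b * c) / c ^ 2 * (starRingEnd ℂ) (α + d / c) /
            ((((‖α + d / c‖ ^ ε) ^ (2 / ε) - ρ ^ (2 / ε) : ℝ)) : ℂ))‖ ^ ε ≤
          (‖a * d - b * c‖ ^ ε) * ρ /
            ((‖c‖ ^ ε) ^ 2 * ((‖α + d / c‖ ^ ε) ^ (2 / ε) - ρ ^ (2 / ε)) ^ ε)} :=
  moebius_image_of_disc_archimedean_general ε hε0 a b c d α ρ hρ hc hdet hsep
end

section
/- Let a,b,c,d,α,β ∈ ℂ((t)) be formal Laurent series, each convergent on a punctured disc {0 < |z| < r} for some r > 0 (so each defines a holomorphic function on 𝔻_r∖{0}, meromorphic at 0), with c ≠ 0 and ad−bc ≠ 0. Let ρ, λ > 0 satisfy the non-Archimedean conditions: |α + d/c|_{na} > ρ, |ad−bc|_{na}·ρ/(|c|²_{na}·|α+d/c|²_{na}) < λ, and |(aα+b)/(cα+d) − β|_{na} < λ. Then there exist v > 0 and z₀ ∈ (0,r) such that for every z with 0 < |z| < z₀ and every x ∈ ℂ with |x − α(z)| < ρ^{log(1/|z|)}, one has c(z)x + d(z)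 ≠ 0 and |(a(z)x + b(z))/(c(z)x + d(z)) − β(z)| ≤ |z|^{v}·λ^{log(1/|z|)}, where f(z) denotes the value at z of the convergent Laurent series f and |·| on ℂ is the usual absolute value. (This is Lemma 3.12 on uniform separation: the Archimedean discs of a degenerating family are eventually contained in a definite shrinking of the disc predicted by the non-Archimedean data.) -/
/-! Write `t = ‖z‖` and `T x = (a x + b) / (c x + d)`. Since `ρ ^ log (1 / t) = t ^ (-log ρ)`,
every hypothesis becomes a strict inequality between exponents of `t`, and a series of order `m`
is `Θ(t ^ m)` as `z → 0`. The first hypothesis gives `‖c‖ ‖x - α‖ = o(‖c α + d‖)` on the disc,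
hence `‖c x + d‖ ≥ ‖c α + d‖ / 2`; the identity
`T x - T α = (a d - b c) (x - α) / ((c x + d) (c α + d))` then bounds `T x - β` by a power of `t`
whose exponent exceeds `-log λ` strictly, and the gap yields the factor `t ^ v`. -/

/-- `F` is holomorphic on a punctured disc around `0` and meromorphic at `0`, with order
exactly `m`: it can be written `F(z) = z^m g(z)` with `g` holomorphic near `0` and
`g(0) ≠ 0`. The non-Archimedean norm of the corresponding Laurent series is `e^{-m}`. -/
def MeroOrdAt (F : ℂ → ℂ) (m : ℤ) : Prop :=
  ∃ r : ℝ, 0 < r ∧ ∃ g : ℂ → ℂ, DifferentiableOn ℂ g (Metric.ball 0 r) ∧ g 0 ≠ 0 ∧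
    ∀ z ∈ Metric.ball (0 : ℂ) r \ {0}, F z = z ^ m * g z

/-- `F` is holomorphic on a punctured disc around `0` and meromorphic at `0` (possibly
vanishing identically near `0`). -/
def MeroAt0 (F : ℂ → ℂ) : Prop :=
  (∃ m : ℤ, MeroOrdAt F m) ∨
    ∃ r : ℝ, 0 < r ∧ ∀ z ∈ Metric.ball (0 : ℂ) r \ {0}, F z = 0

open Filter Topology Asymptotics

lemma rpow_log_one_div {ρ t : ℝ} (hρ : 0 < ρ) (ht : 0 < t) :
    ρ ^ Real.log (1 / t) = t ^ (-Real.log ρ) := by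
  rw [Real.rpow_def_of_pos hρ, Real.rpow_def_of_pos ht, one_div, Real.log_inv]
  ring_nf

lemma exists_pos_forall_of_eventually_nhdsNE {E : Type*} [NormedAddCommGroup E] {P : E → Prop}
    (h : ∀ᶠ z in 𝓝[≠] 0, P z) : ∃ z₀ : ℝ, 0 < z₀ ∧ ∀ z : E, 0 < ‖z‖ → ‖z‖ < z₀ → P z := by
  obtain ⟨ε, hε, H⟩ := Metric.eventually_nhds_iff.1 (eventually_nhdsWithin_iff.1 h)
  exact ⟨ε, hε, fun z hz hzε => H (by simpa using hzε) (norm_pos_iff.1 hz)⟩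

lemma isLittleO_norm_rpow_of_lt {E : Type*} [NormedAddCommGroup E] {s s' : ℝ} (h : s < s') :
    (fun z : E => ‖z‖ ^ s') =o[𝓝[≠] 0] fun z => ‖z‖ ^ s := by
  have hsmall : Tendsto (fun z : E => ‖z‖ ^ (s' - s)) (𝓝[≠] 0) (𝓝 0) := by
    have := (continuous_norm.tendsto (0 : E)).rpow_const (Or.inr (sub_pos.2 h).le)
    simpa [Real.zero_rpow (sub_pos.2 h).ne'] using this.mono_left nhdsWithin_le_nhds
  refine ((isLittleO_one_iff ℝ).2 hsmall |>.mul_isBigO (isBigO_refl (fun z : E => ‖z‖ ^ s) _))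
    |>.congr' ?_ (Eventually.of_forall fun z => one_mul _)
  filter_upwards [eventually_mem_nhdsWithin] with z hz
  rw [← Real.rpow_add (norm_pos_iff.2 hz), sub_add_cancel]

lemma rpow_mul_rpow_eventuallyEq_nhdsNE {E : Type*} [NormedAddCommGroup E] (s s' : ℝ) :
    (fun z : E => ‖z‖ ^ s * ‖z‖ ^ s') =ᶠ[𝓝[≠] 0] fun z => ‖z‖ ^ (s + s') := by
  filter_upwards [eventually_mem_nhdsWithin] with z hz
  rw [Real.rpow_add (norm_pos_iff.2 hz)]

lemma isLittleO_norm_mul_rpow_div_sq {E 𝕜 : Type*} [NormedAddCommGroup E] [NormedField 𝕜]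
    {f g : E → 𝕜} {m k p r : ℝ} (hf : f =O[𝓝[≠] 0] fun z => ‖z‖ ^ m)
    (hg : (fun z => ‖z‖ ^ k) =O[𝓝[≠] 0] g) (hr : r < m + p - 2 * k) :
    (fun z => ‖f z‖ * ‖z‖ ^ p / ‖g z‖ ^ 2) =o[𝓝[≠] 0] fun z => ‖z‖ ^ r := by
  have hpos : ∀ᶠ z in 𝓝[≠] (0 : E), 0 < ‖z‖ :=
    eventually_mem_nhdsWithin.mono fun z hz => norm_pos_iff.2 hz
  have hinv : (fun z => (g z)⁻¹) =O[𝓝[≠] 0] fun z => (‖z‖ ^ k)⁻¹ :=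
    hg.inv_rev (hpos.mono fun z hz h => absurd h (Real.rpow_pos_of_pos hz k).ne')
  refine (((hf.norm_left.mul (isBigO_refl (fun z => ‖z‖ ^ p) _)).mul
    (hinv.norm_left.pow 2)).congr' (Eventually.of_forall fun z => ?_) ?_).trans_isLittleO
    (isLittleO_norm_rpow_of_lt hr)
  · simp [div_eq_mul_inv]
  · filter_upwards [hpos] with z hz
    rw [← Real.rpow_neg hz.le, ← Real.rpow_natCast, ← Real.rpow_mul hz.le, ← Real.rpow_add hz,
      ← Real.rpow_add hz]
    congr 1
    push_cast
    ring

lemma MeroOrdAt.isTheta {F : ℂ → ℂ} {m : ℤ} (h : MeroOrdAt F m) :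
    F =Θ[𝓝[≠] 0] fun z => ‖z‖ ^ (m : ℝ) := by
  obtain ⟨r, hr, g, hg, hg0, hF⟩ := h
  have hg_tendsto : Tendsto g (𝓝[≠] 0) (𝓝 (g 0)) :=
    (hg.continuousOn.continuousAt (Metric.ball_mem_nhds 0 hr)).tendsto.mono_left
      nhdsWithin_le_nhds
  have hg_one : g =Θ[𝓝[≠] 0] fun _ => (1 : ℝ) :=
    ⟨hg_tendsto.isBigO_one ℝ, (isBigO_const_left_iff_pos_le_norm one_ne_zero).2
      ⟨‖g 0‖ / 2, by positivity,
        hg_tendsto.norm.eventually_const_le (half_lt_self (norm_pos_iff.2 hg0))⟩⟩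
  have hpow : (fun z : ℂ => z ^ m) =Θ[𝓝[≠] 0] fun z => ‖z‖ ^ (m : ℝ) :=
    IsTheta.of_norm_eventuallyEq (Eventually.of_forall fun z => by simp [Real.rpow_intCast])
  have hF_eq : (fun z => z ^ m * g z) =ᶠ[𝓝[≠] 0] F :=
    eventuallyEq_of_mem (sdiff_mem_nhdsWithin_compl (Metric.ball_mem_nhds 0 hr) _)
      fun z hz => (hF z hz).symm
  simpa using hF_eq.symm.trans_isTheta (hpow.mul hg_one)

lemma mobius_sub_mobius {K : Type*} [Field K] {a b c d x y : K} (hx : c * x + d ≠ 0)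
    (hy : c * y + d ≠ 0) :
    (a * x + b) / (c * x + d) - (a * y + b) / (c * y + d) =
      (a * d - b * c) * (x - y) / ((c * x + d) * (c * y + d)) := by
  rw [div_sub_div _ _ hx hy]
  ring

section Mobius

variable {a b c d α β : ℂ → ℂ} {mc mac mdet p r : ℝ}

lemma isBigO_mobius_denom (hc : (fun z => ‖z‖ ^ mc) =O[𝓝[≠] 0] c)
    (hac : (fun z => ‖z‖ ^ mac) =O[𝓝[≠] 0] fun z => α z + d z / c z) :
    (fun z => ‖z‖ ^ (mc + mac)) =O[𝓝[≠] 0] fun z => c z * α z + d z := by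
  refine ((hc.mul hac).congr' (rpow_mul_rpow_eventuallyEq_nhdsNE mc mac)
    EventuallyEq.rfl).trans_eventuallyEq ?_
  filter_upwards [hc.eq_zero_imp, eventually_mem_nhdsWithin] with z hcz hz
  have hc0 : c z ≠ 0 := fun h => (Real.rpow_pos_of_pos (norm_pos_iff.2 hz) mc).ne' (hcz h)
  field_simp

lemma eventually_norm_mobius_denom_le (hc : c =Θ[𝓝[≠] 0] fun z => ‖z‖ ^ mc)
    (hac : (fun z => ‖z‖ ^ mac) =O[𝓝[≠] 0] fun z => α z + d z / c z) (hp : mac < p) :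
    ∀ᶠ z in 𝓝[≠] 0, c z * α z + d z ≠ 0 ∧
      ∀ x, ‖x - α z‖ < ‖z‖ ^ p → ‖c z * α z + d z‖ ≤ 2 * ‖c z * x + d z‖ := by
  have hden := isBigO_mobius_denom hc.isBigO_symm hac
  have hsmall : (fun z => ‖c z‖ * ‖z‖ ^ p) =o[𝓝[≠] 0] fun z => c z * α z + d z :=
    ((hc.isBigO.norm_left.mul_isLittleO (isLittleO_norm_rpow_of_lt hp)).congr' EventuallyEq.rfl
      (rpow_mul_rpow_eventuallyEq_nhdsNE mc mac)).trans_isBigO hden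
  filter_upwards [hsmall.def (by norm_num : (0 : ℝ) < 1 / 2), hden.eq_zero_imp,
    eventually_mem_nhdsWithin] with z hsmall_z hden_z hz
  have ht : 0 < ‖z‖ := norm_pos_iff.2 hz
  refine ⟨fun h => (Real.rpow_pos_of_pos ht _).ne' (hden_z h), fun x hx => ?_⟩
  have hsmall_z : ‖c z‖ * ‖z‖ ^ p ≤ ‖c z * α z + d z‖ / 2 := by
    simpa [abs_of_nonneg (Real.rpow_nonneg (norm_nonneg z) p), div_eq_inv_mul] using hsmall_z
  have hsplit : c z * α z + d z = (c z * x + d z) - c z * (x - α z) := by ring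
  have key : ‖c z * α z + d z‖ ≤ ‖c z * x + d z‖ + ‖c z * α z + d z‖ / 2 :=
    calc ‖c z * α z + d z‖ ≤ ‖c z * x + d z‖ + ‖c z‖ * ‖x - α z‖ := by
          rw [hsplit, ← norm_mul]; exact norm_sub_le _ _
      _ ≤ ‖c z * x + d z‖ + ‖c z * α z + d z‖ / 2 := by
          gcongr; exact (mul_le_mul_of_nonneg_left hx.le (norm_nonneg _)).trans hsmall_z
  linarith

theorem eventually_norm_mobius_sub_le (hc : c =Θ[𝓝[≠] 0] fun z => ‖z‖ ^ mc)
    (hdet : (fun z => a z * d z - b z * c z) =O[𝓝[≠] 0] fun z => ‖z‖ ^ mdet)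
    (hac : (fun z => ‖z‖ ^ mac) =O[𝓝[≠] 0] fun z => α z + d z / c z)
    (hγ : (fun z => (a z * α z + b z) / (c z * α z + d z) - β z) =o[𝓝[≠] 0] fun z => ‖z‖ ^ r)
    (hp : mac < p) (hr : r < mdet + p - 2 * (mc + mac)) :
    ∀ᶠ z in 𝓝[≠] 0, ∀ x, ‖x - α z‖ < ‖z‖ ^ p →
      c z * x + d z ≠ 0 ∧ ‖(a z * x + b z) / (c z * x + d z) - β z‖ ≤ ‖z‖ ^ r := by
  have hE := isLittleO_norm_mul_rpow_div_sq hdet (isBigO_mobius_denom hc.isBigO_symm hac) hr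
  filter_upwards [eventually_norm_mobius_denom_le hc hac hp,
    ((hE.const_mul_left 2).add hγ.norm_left).def one_pos] with z ⟨hD, hD_le⟩ hbound x hx
  have hx_ne : c z * x + d z ≠ 0 := by
    intro h
    have := hD_le x hx
    rw [h, norm_zero, mul_zero] at this
    exact hD (norm_le_zero_iff.1 this)
  refine ⟨hx_ne, ?_⟩
  have hD_pos : 0 < ‖c z * α z + d z‖ := norm_pos_iff.2 hD
  rw [Real.norm_of_nonneg (by positivity), Real.norm_of_nonneg (by positivity), one_mul] at hbound
  calc ‖(a z * x + b z) / (c z * x + d z) - β z‖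
      = ‖((a z * x + b z) / (c z * x + d z) - (a z * α z + b z) / (c z * α z + d z)) +
          ((a z * α z + b z) / (c z * α z + d z) - β z)‖ := by ring_nf
    _ ≤ ‖(a z * x + b z) / (c z * x + d z) - (a z * α z + b z) / (c z * α z + d z)‖ +
          ‖(a z * α z + b z) / (c z * α z + d z) - β z‖ := norm_add_le _ _
    _ ≤ 2 * (‖a z * d z - b z * c z‖ * ‖z‖ ^ p / ‖c z * α z + d z‖ ^ 2) +
          ‖(a z * α z + b z) / (c z * α z + d z) - β z‖ := by
        gcongr
        rw [mobius_sub_mobius hx_ne hD, norm_div, norm_mul, norm_mul]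
        calc _ ≤ ‖a z * d z - b z * c z‖ * ‖z‖ ^ p /
              (‖c z * α z + d z‖ / 2 * ‖c z * α z + d z‖) := by
              gcongr
              linarith [hD_le x hx]
          _ = _ := by field_simp
    _ ≤ ‖z‖ ^ r := hbound

end Mobius

theorem uniform_separation_general
    (a b c d α β : ℂ → ℂ)
    (mc : ℤ) (hc : MeroOrdAt c mc)
    (mdet : ℤ) (hdet : MeroOrdAt (fun z => a z * d z - b z * c z) mdet)
    (mac : ℤ) (hac : MeroOrdAt (fun z => α z + d z / c z) mac)
    (ρ lam : ℝ) (hρ : 0 < ρ) (hlam : 0 < lam)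
    (h1 : ρ < Real.exp (-(mac : ℝ)))
    (h2 : Real.exp (-(mdet : ℝ)) * ρ /
        (Real.exp (-(mc : ℝ)) ^ 2 * Real.exp (-(mac : ℝ)) ^ 2) < lam)
    (h3 : (∃ mγ : ℤ,
        MeroOrdAt (fun z => (a z * α z + b z) / (c z * α z + d z) - β z) mγ ∧
        Real.exp (-(mγ : ℝ)) < lam) ∨
      (∃ r : ℝ, 0 < r ∧ ∀ z ∈ Metric.ball (0 : ℂ) r \ {0},
        (a z * α z + b z) / (c z * α z + d z) - β z = 0)) :
    ∃ v : ℝ, 0 < v ∧ ∃ z₀ : ℝ, 0 < z₀ ∧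
      ∀ z : ℂ, 0 < ‖z‖ → ‖z‖ < z₀ →
        ∀ x : ℂ, ‖x - α z‖ < ρ ^ Real.log (1 / ‖z‖) →
          c z * x + d z ≠ 0 ∧
          ‖(a z * x + b z) / (c z * x + d z) - β z‖ ≤
            ‖z‖ ^ v * lam ^ Real.log (1 / ‖z‖) := by
  set p := -Real.log ρ
  set q := -Real.log lam
  have hp : (mac : ℝ) < p := by
    rw [lt_neg, Real.log_lt_iff_lt_exp hρ]
    exact h1
  have hq : q < mdet + p - 2 * (mc + mac) := by
    rw [neg_lt, Real.lt_log_iff_exp_lt hlam]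
    convert h2 using 1
    rw [show -((mdet : ℝ) + p - 2 * (mc + mac)) =
      -mdet + Real.log ρ - (-mc) - (-mc) - (-mac) - (-mac) by ring]
    simp only [Real.exp_add, Real.exp_sub, Real.exp_log hρ]
    ring
  obtain ⟨s, hqs, hγ⟩ : ∃ s, q < s ∧ (fun z => (a z * α z + b z) / (c z * α z + d z) - β z)
      =O[𝓝[≠] 0] fun z => ‖z‖ ^ s := by
    rcases h3 with ⟨mγ, hmγ, hlt⟩ | ⟨r, hr, hzero⟩
    · refine ⟨mγ, ?_, hmγ.isTheta.isBigO⟩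
      rw [neg_lt, Real.lt_log_iff_exp_lt hlam]
      exact hlt
    · refine ⟨q + 1, lt_add_one q, (isBigO_zero _ _).congr' ?_ EventuallyEq.rfl⟩
      exact eventuallyEq_of_mem (sdiff_mem_nhdsWithin_compl (Metric.ball_mem_nhds 0 hr) _)
        fun z hz => (hzero z hz).symm
  obtain ⟨r, hqr, hr⟩ := exists_between (lt_min hqs hq)
  obtain ⟨z₀, hz₀, H⟩ := exists_pos_forall_of_eventually_nhdsNE
    (eventually_norm_mobius_sub_le hc.isTheta hdet.isTheta.isBigO hac.isTheta.isBigO_symm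
      (hγ.trans_isLittleO (isLittleO_norm_rpow_of_lt (hr.trans_le (min_le_left _ _)))) hp
      (hr.trans_le (min_le_right _ _)))
  refine ⟨r - q, sub_pos.2 hqr, z₀, hz₀, fun z hz hzz₀ x hx => ?_⟩
  rw [rpow_log_one_div hρ hz] at hx
  rw [rpow_log_one_div hlam hz, ← Real.rpow_add hz, sub_add_cancel]
  exact H z hz hzz₀ x hx

/-- **Lemma 3.12** (uniform separation): if the non-Archimedean data of a degenerating
Möbius family predicts that the image of the disc `D(α,ρ)` is contained in `D(β,λ)`, then
for small `z` the Archimedean image discs are contained in a definite shrinking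
`|z|^v · λ^{log(1/|z|)}` of the predicted disc. -/
theorem uniform_separation
    (a b c d α β : ℂ → ℂ)
    (ha : MeroAt0 a) (hb : MeroAt0 b) (hd : MeroAt0 d) (hα : MeroAt0 α) (hβ : MeroAt0 β)
    (mc : ℤ) (hc : MeroOrdAt c mc)
    (mdet : ℤ) (hdet : MeroOrdAt (fun z => a z * d z - b z * c z) mdet)
    (mac : ℤ) (hac : MeroOrdAt (fun z => α z + d z / c z) mac)
    (ρ lam : ℝ) (hρ : 0 < ρ) (hlam : 0 < lam)
    (h1 : ρ < Real.exp (-(mac : ℝ)))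
    (h2 : Real.exp (-(mdet : ℝ)) * ρ /
        (Real.exp (-(mc : ℝ)) ^ 2 * Real.exp (-(mac : ℝ)) ^ 2) < lam)
    (h3 : (∃ mγ : ℤ,
        MeroOrdAt (fun z => (a z * α z + b z) / (c z * α z + d z) - β z) mγ ∧
        Real.exp (-(mγ : ℝ)) < lam) ∨
      (∃ r : ℝ, 0 < r ∧ ∀ z ∈ Metric.ball (0 : ℂ) r \ {0},
        (a z * α z + b z) / (c z * α z + d z) - β z = 0)) :
    ∃ v : ℝ, 0 < v ∧ ∃ z₀ : ℝ, 0 < z₀ ∧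
      ∀ z : ℂ, 0 < ‖z‖ → ‖z‖ < z₀ →
        ∀ x : ℂ, ‖x - α z‖ < ρ ^ Real.log (1 / ‖z‖) →
          c z * x + d z ≠ 0 ∧
          ‖(a z * x + b z) / (c z * x + d z) - β z‖ ≤
            ‖z‖ ^ v * lam ^ Real.log (1 / ‖z‖) :=
  uniform_separation_general a b c d α β mc hc mdet hdet mac hac ρ lam hρ hlam h1 h2 h3
end

section
/- Let M ∈ ℕ and let γ = [[a,b],[c,d]] ∈ SL₂(ℂ((t))) with c ≠ 0. For w ∈ ℂ((t)) with w ≠ −d/c, set γ'(w) = (cw+d)^{−2}. Then for all x, y ∈ ℂ((t))∖{−d/c} with |x − y|_{na} < e^{−M}·|x + d/c|_{na}, one has |γ'(x) − γ'(y)|_{na} < e^{−M}·|γ'(x)|_{na}; equivalently, the Laurent expansions of γ'(x) and γ'(y) have the same order and their first M+1 coefficients coincide. (This is Lemma 5.3: the truncation of the derivative cocycle to its leading M terms is locally constant.) -/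
open scoped Classical

/-- The non-Archimedean absolute value `|f|_{na} = e^{-ord(f)}` on the field of formal
Laurent series `ℂ((t))`. -/
noncomputable def naNorm (f : LaurentSeries ℂ) : ℝ :=
  if f = 0 then 0 else Real.exp (-(f.order : ℝ))

lemma naNorm_zero : naNorm 0 = 0 := by simp [naNorm]

lemma naNorm_of_ne {f : LaurentSeries ℂ} (hf : f ≠ 0) :
    naNorm f = Real.exp (-(f.order : ℝ)) := by simp [naNorm, hf]

lemma naNorm_nonneg (f : LaurentSeries ℂ) : 0 ≤ naNorm f := by
  by_cases h : f = 0
  · simp [h, naNorm_zero]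
  · rw [naNorm_of_ne h]; exact (Real.exp_pos _).le

lemma naNorm_pos {f : LaurentSeries ℂ} (hf : f ≠ 0) : 0 < naNorm f := by
  rw [naNorm_of_ne hf]; exact Real.exp_pos _

lemma naNorm_mul (f g : LaurentSeries ℂ) : naNorm (f * g) = naNorm f * naNorm g := by
  by_cases hf : f = 0
  · simp [hf, naNorm_zero]
  by_cases hg : g = 0
  · simp [hg, naNorm_zero]
  rw [naNorm_of_ne hf, naNorm_of_ne hg, naNorm_of_ne (mul_ne_zero hf hg),
    HahnSeries.order_mul hf hg, ← Real.exp_add]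
  push_cast
  ring_nf

lemma naNorm_one : naNorm 1 = 1 := by
  rw [naNorm_of_ne one_ne_zero, HahnSeries.order_one]
  simp

lemma naNorm_inv (f : LaurentSeries ℂ) : naNorm f⁻¹ = (naNorm f)⁻¹ := by
  by_cases hf : f = 0
  · simp [hf, naNorm_zero]
  have h := naNorm_mul f f⁻¹
  rw [mul_inv_cancel₀ hf, naNorm_one] at h
  exact eq_inv_of_mul_eq_one_right (by linear_combination -h)

lemma naNorm_neg (f : LaurentSeries ℂ) : naNorm (-f) = naNorm f := by
  by_cases hf : f = 0
  · simp [hf]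
  · rw [naNorm_of_ne hf, naNorm_of_ne (neg_ne_zero.mpr hf), HahnSeries.order_neg]

lemma naNorm_add_le (f g : LaurentSeries ℂ) :
    naNorm (f + g) ≤ max (naNorm f) (naNorm g) := by
  by_cases hf : f = 0
  · simp [hf, le_max_right]
  by_cases hg : g = 0
  · simp [hg, le_max_left]
  by_cases hfg : f + g = 0
  · simp [hfg, naNorm_zero]
    left; exact naNorm_nonneg f
  have h := HahnSeries.min_order_le_order_add hfg
  rw [naNorm_of_ne hf, naNorm_of_ne hg, naNorm_of_ne hfg]
  rcases le_total f.order g.order with h2 | h2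
  · have hle : f.order ≤ (f + g).order := le_trans (by simp [min_eq_left h2]) h
    exact le_max_of_le_left (Real.exp_le_exp.mpr (by exact_mod_cast neg_le_neg hle))
  · have hle : g.order ≤ (f + g).order := le_trans (by simp [min_eq_right h2]) h
    exact le_max_of_le_right (Real.exp_le_exp.mpr (by exact_mod_cast neg_le_neg hle))

/-- **Lemma 5.3**: local constancy of the leading terms of the derivative cocycle. If
`γ = [[a,b],[c,d]] ∈ SL₂(ℂ((t)))` with `c ≠ 0`, `γ'(w) = (cw+d)^{-2}`, and
`|x - y|_{na} < e^{-M} |x + d/c|_{na}`, then `|γ'(x) - γ'(y)|_{na} < e^{-M} |γ'(x)|_{na}`. -/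
theorem leading_terms_derivative_locally_constant
    (M : ℕ) (a b c d : LaurentSeries ℂ)
    (hdet : a * d - b * c = 1) (hc : c ≠ 0)
    (x y : LaurentSeries ℂ) (hx : x ≠ -d / c) (hy : y ≠ -d / c)
    (hclose : naNorm (x - y) < Real.exp (-(M : ℝ)) * naNorm (x + d / c)) :
    naNorm (((c * x + d) ^ 2)⁻¹ - ((c * y + d) ^ 2)⁻¹) <
      Real.exp (-(M : ℝ)) * naNorm (((c * x + d) ^ 2)⁻¹) := by
  set u : LaurentSeries ℂ := x + d / c with hu
  set v : LaurentSeries ℂ := y + d / c with hv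
  have hu0 : u ≠ 0 := by
    intro h
    apply hx
    have : x = -(d / c) := by rw [hu] at h; linear_combination h
    rw [this]
    exact (neg_div c d).symm
  have hv0 : v ≠ 0 := by
    intro h
    apply hy
    have : y = -(d / c) := by rw [hv] at h; linear_combination h
    rw [this]
    exact (neg_div c d).symm
  have hcu : c * x + d = c * u := by
    rw [hu]; field_simp
  have hcv : c * y + d = c * v := by
    rw [hv]; field_simp
  have hxy : x - y = u - v := by rw [hu, hv]; ring
  -- key algebraic identity
  have key : ((c * x + d) ^ 2)⁻¹ - ((c * y + d) ^ 2)⁻¹ =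
      (v - u) * (v + u) * (c ^ 2 * u ^ 2 * v ^ 2)⁻¹ := by
    rw [hcu, hcv]
    field_simp
    ring
  set A := naNorm (u - v) with hA
  set U := naNorm u with hU
  set V := naNorm v with hV
  set C := naNorm c with hC
  have hUpos : 0 < U := naNorm_pos hu0
  have hVpos : 0 < V := naNorm_pos hv0
  have hCpos : 0 < C := naNorm_pos hc
  have hAU : A < Real.exp (-(M : ℝ)) * U := by rw [hA, ← hxy]; exact hclose
  have hexp1 : Real.exp (-(M : ℝ)) ≤ 1 := by
    rw [Real.exp_le_one_iff]
    simp
  have hAltU : A < U := lt_of_lt_of_le hAU (by nlinarith)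
  -- V = U
  have hVU : V = U := by
    have h1 : V ≤ max U A := by
      have hvu : naNorm (v - u) = A := by rw [hA, ← naNorm_neg (u - v), neg_sub]
      have he : v = u + (v - u) := by ring
      rw [hV, he]
      calc naNorm (u + (v - u)) ≤ max (naNorm u) (naNorm (v - u)) := naNorm_add_le _ _
        _ = max U A := by rw [hvu, hU]
    have hVleU : V ≤ U := le_trans h1 (by simp [le_of_lt hAltU])
    have h2 : U ≤ max V A := by
      have : u = v + (u - v) := by ring
      rw [hU, this]
      calc naNorm (v + (u - v)) ≤ max (naNorm v) (naNorm (u - v)) := naNorm_add_le _ _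
        _ = max V A := by rw [hA, hV]
    have : U ≤ V := by
      rcases max_cases V A with ⟨he, _⟩ | ⟨he, hlt⟩
      · rw [he] at h2; exact h2
      · rw [he] at h2; linarith
    linarith
  -- |v + u| ≤ U
  have hsum : naNorm (v + u) ≤ U := by
    calc naNorm (v + u) ≤ max (naNorm v) (naNorm u) := naNorm_add_le _ _
      _ = U := by rw [← hV, ← hU, hVU]; simp
  -- norm of LHS
  have hLHS : naNorm (((c * x + d) ^ 2)⁻¹ - ((c * y + d) ^ 2)⁻¹) =
      A * naNorm (v + u) * (C ^ 2 * U ^ 2 * V ^ 2)⁻¹ := by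
    have hvu : naNorm (v - u) = A := by rw [hA, ← naNorm_neg (u - v), neg_sub]
    rw [key]
    simp only [naNorm_mul, naNorm_inv, pow_two]
    rw [← hU, ← hV, ← hC, hvu]
    try ring
  have hRHS : naNorm (((c * x + d) ^ 2)⁻¹) = (C ^ 2 * U ^ 2)⁻¹ := by
    rw [hcu]
    simp only [naNorm_mul, naNorm_inv, pow_two]
    rw [← hU, ← hC]
    try ring
  rw [hLHS, hRHS, hVU]
  have hAnn : 0 ≤ A := naNorm_nonneg _
  have hsnn : 0 ≤ naNorm (v + u) := naNorm_nonneg _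
  have hinvpos : 0 < (C ^ 2 * U ^ 2 * U ^ 2)⁻¹ := by positivity
  calc A * naNorm (v + u) * (C ^ 2 * U ^ 2 * U ^ 2)⁻¹
      ≤ A * U * (C ^ 2 * U ^ 2 * U ^ 2)⁻¹ := by
        apply mul_le_mul_of_nonneg_right _ hinvpos.le
        exact mul_le_mul_of_nonneg_left hsum hAnn
    _ < (Real.exp (-(M : ℝ)) * U) * U * (C ^ 2 * U ^ 2 * U ^ 2)⁻¹ := by
        apply mul_lt_mul_of_pos_right _ hinvpos
        exact mul_lt_mul_of_pos_right hAU hUpos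
    _ = Real.exp (-(M : ℝ)) * (C ^ 2 * U ^ 2)⁻¹ := by
        field_simp
end

section
/- There exists a universal constant C₁ > 0 with the following property. Let C, A > 0, m, m' ∈ ℤ, and let f(t) = t^m·Σ_{j≥0} f_j t^j and g(t) = t^{m'}·Σ_{j≥0} g_j t^j be formal Laurent series over ℂ with f₀ ≠ 0, |f_j| ≤ e^{C(j+1)} for all j ≥ 0, |g₀| ≥ e^{−A}, and |g_j| ≤ e^{C(j+1)} for all j ≥ 0. Then the quotient has the expansion f(t)/g(t) = t^{m−m'}·Σ_{j≥0} h_j t^j with |h_j| ≤ e^{(3C+C₁+A)(j+1)} for all j ≥ 0. -/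
/-!
Write `f = t^m F` and `g = t^{m'} G` with power series `F, G`; since `G(0) = g₀ ≠ 0`, `G` is a
unit and `f / g = t^{m-m'} H` with `H = F G⁻¹`. Comparing coefficients in `G H = F` gives
`g₀ h_j = f_j - ∑_{1 ≤ i ≤ j} g_i h_{j-i}`, and by strong induction `|h_j| ≤ e^{D(j+1)}` with
`D = 3C + 2 + A`: each term of the right-hand side is at most `e^{D(j+1)} r^i` with
`r = e^{-(2+A)}`, so `|h_j| ≤ e^A e^{D(j+1)} r / (1 - r) ≤ e^{D(j+1)}`.
-/

noncomputable def laurentOf (m : ℤ) (c : ℕ → ℂ) : LaurentSeries ℂ :=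
  HahnSeries.single m (1 : ℂ) * HahnSeries.ofPowerSeries ℤ ℂ (PowerSeries.mk c)

open PowerSeries Finset Real

theorem HahnSeries.single_mul_ofPowerSeries_div {K : Type*} [Field K] (m m' : ℤ) (F G : K⟦X⟧)
    (hG : constantCoeff G ≠ 0) :
    single m 1 * ofPowerSeries ℤ K F / (single m' 1 * ofPowerSeries ℤ K G) =
      single (m - m') 1 * ofPowerSeries ℤ K (F * G⁻¹) := by
  have hG' : G ≠ 0 := fun h => hG (by simp [h])
  have hden : single m' (1 : K) * ofPowerSeries ℤ K G ≠ 0 :=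
    mul_ne_zero (single_ne_zero one_ne_zero)
      ((map_ne_zero_iff _ ofPowerSeries_injective).2 hG')
  rw [div_eq_iff hden, mul_mul_mul_comm, single_mul_single, ← map_mul, mul_assoc,
    PowerSeries.inv_mul_cancel G hG, mul_one, mul_one, sub_add_cancel]

theorem PowerSeries.constantCoeff_mul_coeff_of_mul_eq {R : Type*} [CommRing R] {F G H : R⟦X⟧}
    (hGH : G * H = F) (n : ℕ) :
    constantCoeff G * coeff n H = coeff n F - ∑ i ∈ Ico 1 (n + 1), coeff i G * coeff (n - i) H := by
  rw [← hGH, coeff_mul, Nat.sum_antidiagonal_eq_sum_range_succ (fun i k => coeff i G * coeff k H),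
    range_eq_Ico, sum_eq_sum_Ico_succ_bot n.succ_pos, coeff_zero_eq_constantCoeff_apply,
    Nat.sub_zero]
  ring

section Exponents

variable {C A : ℝ}

theorem exp_le_exp_mul_exp_neg_pow (hC : 0 ≤ C) (j : ℕ) :
    rexp (C * (j + 1)) ≤ rexp ((3 * C + 2 + A) * (j + 1)) * rexp (-(2 + A)) ^ (j + 1) := by
  rw [← exp_nat_mul, ← exp_add, exp_le_exp]
  push_cast
  nlinarith [j.cast_nonneg (α := ℝ)]

theorem exp_mul_exp_le_exp_mul_exp_neg_pow (hC : 0 ≤ C) {i j : ℕ} (hi : 1 ≤ i) (hij : i ≤ j) :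
    rexp (C * (i + 1)) * rexp ((3 * C + 2 + A) * ((j - i : ℕ) + 1)) ≤
      rexp ((3 * C + 2 + A) * (j + 1)) * rexp (-(2 + A)) ^ i := by
  rw [← exp_nat_mul, ← exp_add, ← exp_add, exp_le_exp, Nat.cast_sub hij]
  have hi' : (1 : ℝ) ≤ i := by exact_mod_cast hi
  nlinarith

theorem exp_mul_geom_le_one (hA : 0 ≤ A) :
    rexp A * (rexp (-(2 + A)) / (1 - rexp (-(2 + A)))) ≤ 1 := by
  have h3 : 3 ≤ rexp 2 := by linarith [add_one_le_exp (2 : ℝ)]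
  have hr : rexp (-(2 + A)) ≤ rexp (-2) := exp_le_exp.2 (by linarith)
  have hr3 : rexp (-2) ≤ 1 / 3 := by
    rw [exp_neg]; exact inv_le_of_inv_le₀ (by norm_num) (by simpa using h3)
  rw [mul_div_assoc', ← exp_add, div_le_one (by linarith), show A + -(2 + A) = -2 by ring]
  linarith

end Exponents

theorem PowerSeries.norm_coeff_le_of_mul_eq {𝕜 : Type*} [NormedField 𝕜] {C A : ℝ} (hC : 0 ≤ C)
    (hA : 0 ≤ A) {F G H : 𝕜⟦X⟧} (hGH : G * H = F) (hF : ∀ j, ‖coeff j F‖ ≤ rexp (C * (j + 1)))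
    (hG₀ : rexp (-A) ≤ ‖constantCoeff G‖) (hG : ∀ j, ‖coeff j G‖ ≤ rexp (C * (j + 1))) (j : ℕ) :
    ‖coeff j H‖ ≤ rexp ((3 * C + 2 + A) * (j + 1)) := by
  set D := 3 * C + 2 + A
  set r := rexp (-(2 + A))
  have hr1 : r < 1 := exp_lt_one_iff.2 (by linarith)
  induction j using Nat.strong_induction_on with
  | _ j ih =>
  have hterm : ∀ i ∈ Ico 1 (j + 1), ‖coeff i G * coeff (j - i) H‖ ≤ rexp (D * (j + 1)) * r ^ i := by
    intro i hi
    obtain ⟨hi1, hij⟩ := mem_Ico.1 hi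
    rw [norm_mul]
    exact (mul_le_mul (hG i) (ih _ (by omega)) (norm_nonneg _) (exp_pos _).le).trans
      (exp_mul_exp_le_exp_mul_exp_neg_pow hC hi1 (by omega))
  have hrec : rexp (-A) * ‖coeff j H‖ ≤ rexp (D * (j + 1)) * (r / (1 - r)) :=
    calc rexp (-A) * ‖coeff j H‖ ≤ ‖constantCoeff G * coeff j H‖ := by
          rw [norm_mul]; gcongr
      _ ≤ ‖coeff j F‖ + ∑ i ∈ Ico 1 (j + 1), ‖coeff i G * coeff (j - i) H‖ := by
          rw [constantCoeff_mul_coeff_of_mul_eq hGH]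
          refine (norm_sub_le _ _).trans ?_
          gcongr
          exact norm_sum_le _ _
      _ ≤ rexp (D * (j + 1)) * r ^ (j + 1) + ∑ i ∈ Ico 1 (j + 1), rexp (D * (j + 1)) * r ^ i :=
          add_le_add ((hF j).trans (exp_le_exp_mul_exp_neg_pow hC j)) (sum_le_sum hterm)
      _ = rexp (D * (j + 1)) * ∑ i ∈ Ico 1 (j + 1 + 1), r ^ i := by
          rw [mul_sum, sum_Ico_succ_top (a := 1) (b := j + 1) (by omega), add_comm]
      _ ≤ rexp (D * (j + 1)) * (r / (1 - r)) := by
          gcongr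
          simpa only [pow_one] using geom_sum_Ico_le_of_lt_one (m := 1) (exp_pos _).le hr1
  calc ‖coeff j H‖ = rexp A * (rexp (-A) * ‖coeff j H‖) := by
        rw [← mul_assoc, ← exp_add, add_neg_cancel, exp_zero, one_mul]
    _ ≤ rexp A * (rexp (D * (j + 1)) * (r / (1 - r))) := by gcongr
    _ = rexp (D * (j + 1)) * (rexp A * (r / (1 - r))) := by ring
    _ ≤ rexp (D * (j + 1)) := mul_le_of_le_one_right (exp_pos _).le (exp_mul_geom_le_one hA)

/-- **Lemma 7.2**: coefficient bounds for the quotient of two Laurent series with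
exponentially bounded coefficients, the denominator having a lower bound on its leading
coefficient. -/
theorem laurent_div_coeff_bound :
    ∃ C₁ : ℝ, 0 < C₁ ∧
      ∀ C A : ℝ, 0 < C → 0 < A → ∀ m m' : ℤ, ∀ fc gc : ℕ → ℂ,
        fc 0 ≠ 0 →
        (∀ j : ℕ, ‖fc j‖ ≤ Real.exp (C * (j + 1))) →
        Real.exp (-A) ≤ ‖gc 0‖ →
        (∀ j : ℕ, ‖gc j‖ ≤ Real.exp (C * (j + 1))) →
        ∃ hc : ℕ → ℂ,
          laurentOf m fc / laurentOf m' gc = laurentOf (m - m') hc ∧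
          ∀ j : ℕ, ‖hc j‖ ≤ Real.exp ((3 * C + C₁ + A) * (j + 1)) := by
  refine ⟨2, two_pos, fun C A hC hA m m' fc gc _ hfc hgc₀ hgc => ?_⟩
  have hG₀ : constantCoeff (mk gc) ≠ 0 := by
    rw [← coeff_zero_eq_constantCoeff_apply, coeff_mk, ← norm_pos_iff]
    exact (exp_pos _).trans_le hgc₀
  refine ⟨fun j => coeff j (mk fc * (mk gc)⁻¹), ?_, fun j => ?_⟩
  · have hmk : mk (fun j => coeff j (mk fc * (mk gc)⁻¹)) = mk fc * (mk gc)⁻¹ :=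
      ext fun j => coeff_mk _ _
    rw [laurentOf, laurentOf, laurentOf, hmk]
    exact HahnSeries.single_mul_ofPowerSeries_div m m' _ _ hG₀
  · have hGH : mk gc * (mk fc * (mk gc)⁻¹) = mk fc := by
      rw [mul_left_comm, PowerSeries.mul_inv_cancel _ hG₀, mul_one]
    refine norm_coeff_le_of_mul_eq hC.le hA.le hGH ?_ ?_ ?_ j
    all_goals simpa [coeff_mk, ← coeff_zero_eq_constantCoeff_apply]
end

section
/- There exists a universal constant C₀ > 0 with the following property. Let C > 0, m ∈ ℤ, and let f(t) = t^m·Σ_{j≥0} f_j t^j be a formal Laurent series over ℂ with f₀ ≠ 0 and |f_j| ≤ e^{C(j+1)} for all j ≥ 0. Let L(t) = Σ_{j≥1} c_j t^j be the unique formal power series with zero constant term satisfying exp(L(t)) = Σ_{j≥0} (f_j/f₀) t^j (the formal logarithm of the unit part of f, so that formally log(f(t)) = m·log t + log f₀ + Σ_{j≥1} c_j t^j). Then |c_j| ≤ |f₀|^{−j}·e^{(3C+C₀)j} for all j ≥ 1. -/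
/-!
Differentiating `exp L = G`, where `G = ∑ g_j tʲ` with `g_j = f_j / f₀` and `L = ∑ c_j tʲ`, gives
`G' = G L'`, i.e. `(n + 1) c_{n+1} = (n + 1) g_{n+1} - ∑_{k<n} (k + 1) c_{k+1} g_{n-k}`.
If `|g_j| ≤ Mʲ` for `j ≥ 1`, strong induction gives `|c_j| ≤ (2M)ʲ`, because
`M^{n+1} (1 + ∑_{k<n} 2^{k+1}) < (2M)^{n+1}`. The growth hypothesis on `f` yields
`M = e^{2C} / |f₀|` (using `|f₀| ≤ e^C`), so `C₀ = log 2` works.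
-/

open PowerSeries Finset Nat

theorem PowerSeries.coeff_pow_eq_zero_of_lt {R : Type*} [CommSemiring R] {L : R⟦X⟧}
    (hL : constantCoeff L = 0) {k n : ℕ} (hkn : k < n) : coeff k (L ^ n) = 0 :=
  coeff_of_lt_order k <|
    (Nat.cast_lt.mpr hkn).trans_le (le_order_pow_of_constantCoeff_eq_zero n hL)

section FormalExp

variable {K : Type*} [Field K]

noncomputable def expPartialSum (L : K⟦X⟧) (N : ℕ) : K⟦X⟧ :=
  ∑ n ∈ range N, (n ! : K)⁻¹ • L ^ n

theorem coeff_expPartialSum_of_lt {L : K⟦X⟧} (hL : constantCoeff L = 0) {k N : ℕ}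
    (hkN : k < N) :
    coeff k (expPartialSum L N) = ∑ n ∈ range (k + 1), (n ! : K)⁻¹ * coeff k (L ^ n) := by
  simp only [expPartialSum, map_sum, coeff_smul, smul_eq_mul]
  refine (sum_subset (range_subset_range.mpr hkN) fun n _ hn => ?_).symm
  rw [coeff_pow_eq_zero_of_lt hL (by simpa using hn), mul_zero]

theorem derivative_expPartialSum_succ [CharZero K] (L : K⟦X⟧) (N : ℕ) :
    d⁄dX K (expPartialSum L (N + 1)) = expPartialSum L N * d⁄dX K L := by
  simp only [expPartialSum, map_sum, Derivation.map_smul, derivative_pow, sum_mul]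
  rw [sum_range_succ', Nat.cast_zero, zero_mul, zero_mul, smul_zero, add_zero]
  refine sum_congr rfl fun n _ => ?_
  rw [Nat.add_sub_cancel, mul_assoc, ← nsmul_eq_mul, ← Nat.cast_smul_eq_nsmul K, smul_smul,
    smul_mul_assoc]
  congr 1
  have := Nat.cast_add_one_ne_zero (R := K) n
  push_cast [factorial_succ]
  field_simp

theorem derivative_eq_mul_derivative_of_coeff_eq_exp [CharZero K] {G L : K⟦X⟧}
    (hL : constantCoeff L = 0)
    (hG : ∀ j, coeff j G = ∑ n ∈ range (j + 1), (n ! : K)⁻¹ * coeff j (L ^ n)) :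
    d⁄dX K G = G * d⁄dX K L := by
  ext j
  have hGE : ∀ k < j + 1, coeff k G = coeff k (expPartialSum L (j + 1)) := fun k hk => by
    rw [hG, coeff_expPartialSum_of_lt hL hk]
  rw [coeff_derivative, hG, ← coeff_expPartialSum_of_lt hL (Nat.lt_succ_self (j + 1)),
    ← coeff_derivative, derivative_expPartialSum_succ, coeff_mul, coeff_mul]
  exact sum_congr rfl fun p hp => by rw [hGE p.1 (Finset.Nat.antidiagonal.fst_lt hp)]

end FormalExp

theorem coeff_succ_mul_eq_of_derivative_eq_mul {R : Type*} [CommRing R] {G L : R⟦X⟧}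
    (hG0 : constantCoeff G = 1) (hGL : d⁄dX R G = G * d⁄dX R L) (n : ℕ) :
    coeff (n + 1) L * (n + 1) =
      coeff (n + 1) G * (n + 1) - ∑ k ∈ range n, coeff (k + 1) L * (k + 1) * coeff (n - k) G := by
  have h := congrArg (coeff n) hGL
  rw [mul_comm, coeff_mul,
    Nat.sum_antidiagonal_eq_sum_range_succ (fun a b => coeff a (d⁄dX R L) * coeff b G), sum_range_succ,
    Nat.sub_self, coeff_zero_eq_constantCoeff_apply, hG0, mul_one] at h
  simp only [coeff_derivative] at h
  rw [h]
  ring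

theorem norm_coeff_le_of_derivative_eq_mul {𝕜 : Type*} [RCLike 𝕜] {G L : 𝕜⟦X⟧} {M : ℝ}
    (hG0 : constantCoeff G = 1) (hG : ∀ j, 0 < j → ‖coeff j G‖ ≤ M ^ j)
    (hGL : d⁄dX 𝕜 G = G * d⁄dX 𝕜 L) : ∀ j, 0 < j → ‖coeff j L‖ ≤ (2 * M) ^ j := by
  have hM : 0 ≤ M := by simpa using (norm_nonneg _).trans (hG 1 one_pos)
  have norm_succ : ∀ k : ℕ, ‖(k + 1 : 𝕜)‖ = k + 1 := fun k => by
    exact_mod_cast RCLike.norm_natCast (K := 𝕜) (k + 1)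
  intro j
  induction j using Nat.strong_induction_on with
  | _ j ih =>
  intro hj
  obtain ⟨n, rfl⟩ := Nat.exists_eq_add_one_of_ne_zero hj.ne'
  have hterm : ∀ k ∈ range n, ‖coeff (k + 1) L * (k + 1) * coeff (n - k) G‖ ≤
      (n + 1) * (M ^ (n + 1) * 2 ^ (k + 1)) := fun k hk => by
    have hkn := mem_range.mp hk
    rw [norm_mul, norm_mul, norm_succ]
    calc ‖coeff (k + 1) L‖ * (k + 1) * ‖coeff (n - k) G‖
        ≤ (2 * M) ^ (k + 1) * (n + 1) * M ^ (n - k) := by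
          gcongr
          · exact ih _ (by omega) k.succ_pos
          · exact hG _ (by omega)
      _ = (n + 1) * (M ^ (n + 1) * 2 ^ (k + 1)) := by
          rw [mul_pow, show n + 1 = k + 1 + (n - k) by omega, pow_add]
          ring
  have hsum : M ^ (n + 1) + ∑ k ∈ range n, M ^ (n + 1) * 2 ^ (k + 1) ≤ (2 * M) ^ (n + 1) := by
    rw [← mul_sum, mul_pow, ← mul_one_add, mul_comm (2 ^ (n + 1))]
    gcongr
    have hgeom := Nat.geomSum_lt le_rfl (s := range (n + 1)) (n := n + 1) fun k => mem_range.mp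
    rw [sum_range_succ'] at hgeom
    exact_mod_cast (by omega : 1 + ∑ k ∈ range n, 2 ^ (k + 1) ≤ 2 ^ (n + 1))
  have key : ‖coeff (n + 1) L‖ * (n + 1) ≤ (2 * M) ^ (n + 1) * (n + 1) := by
    calc ‖coeff (n + 1) L‖ * (n + 1) = ‖coeff (n + 1) L * (n + 1)‖ := by
          rw [norm_mul, norm_succ]
      _ = ‖coeff (n + 1) G * (n + 1) -
            ∑ k ∈ range n, coeff (k + 1) L * (k + 1) * coeff (n - k) G‖ := by
          rw [coeff_succ_mul_eq_of_derivative_eq_mul hG0 hGL]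
      _ ≤ M ^ (n + 1) * (n + 1) + ∑ k ∈ range n, (n + 1) * (M ^ (n + 1) * 2 ^ (k + 1)) := by
          refine (norm_sub_le _ _).trans
            (add_le_add ?_ ((norm_sum_le _ _).trans (sum_le_sum hterm)))
          rw [norm_mul, norm_succ]
          gcongr
          exact hG _ n.succ_pos
      _ = (M ^ (n + 1) + ∑ k ∈ range n, M ^ (n + 1) * 2 ^ (k + 1)) * (n + 1) := by
          rw [← mul_sum]; ring
      _ ≤ (2 * M) ^ (n + 1) * (n + 1) := by gcongr
  exact le_of_mul_le_mul_right key (by positivity)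

theorem norm_div_le_pow_of_norm_le_exp {𝕜 : Type*} [NormedField 𝕜] {f : ℕ → 𝕜} {C : ℝ}
    (hf0 : f 0 ≠ 0) (hf : ∀ j : ℕ, ‖f j‖ ≤ Real.exp (C * (j + 1))) (j : ℕ) (hj : 0 < j) :
    ‖f j / f 0‖ ≤ (Real.exp (2 * C) / ‖f 0‖) ^ j := by
  obtain ⟨n, rfl⟩ := Nat.exists_eq_add_one_of_ne_zero hj.ne'
  have hF : 0 < ‖f 0‖ := norm_pos_iff.mpr hf0
  have hFn : ‖f 0‖ ^ n ≤ Real.exp (C * n) := by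
    rw [mul_comm, Real.exp_nat_mul]
    exact pow_le_pow_left₀ hF.le (by simpa using hf 0) n
  rw [norm_div, div_pow, div_le_div_iff₀ hF (by positivity), pow_succ, ← mul_assoc]
  gcongr
  calc ‖f (n + 1)‖ * ‖f 0‖ ^ n ≤ Real.exp (C * (n + 1 + 1)) * Real.exp (C * n) := by
        gcongr
        exact_mod_cast hf (n + 1)
    _ = Real.exp (2 * C) ^ (n + 1) := by
        rw [← Real.exp_add, ← Real.exp_nat_mul]
        push_cast
        ring_nf

/-- **Lemma 7.3**: coefficient bounds for the formal logarithm of the unit part of a Laurent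
series with exponentially bounded coefficients. `L = Σ_{j≥1} c_j t^j` is the unique formal
power series with zero constant term such that `exp(L) = Σ_{j≥0} (f_j/f₀) t^j`; its
coefficients satisfy `|c_j| ≤ |f₀|^{-j} e^{(3C+C₀)j}`. -/
theorem laurent_log_coeff_bound :
    ∃ C₀ : ℝ, 0 < C₀ ∧
      ∀ C : ℝ, 0 < C → ∀ m : ℤ, ∀ fc : ℕ → ℂ,
        fc 0 ≠ 0 →
        (∀ j : ℕ, ‖fc j‖ ≤ Real.exp (C * (j + 1))) →
        ∀ cs : ℕ → ℂ, cs 0 = 0 →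
        (∀ j : ℕ,
          (∑ n ∈ Finset.range (j + 1),
            ((n.factorial : ℂ))⁻¹ * PowerSeries.coeff j ((PowerSeries.mk cs) ^ n)) =
          fc j / fc 0) →
        ∀ j : ℕ, 1 ≤ j → ‖cs j‖ ≤ (‖fc 0‖ ^ j)⁻¹ * Real.exp ((3 * C + C₀) * j) := by
  refine ⟨Real.log 2, Real.log_pos one_lt_two, fun C hC _ fc hf0 hfc cs hcs0 hexp j hj => ?_⟩
  set G : ℂ⟦X⟧ := mk fun j => fc j / fc 0
  have hGL : d⁄dX ℂ G = G * d⁄dX ℂ (mk cs) :=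
    derivative_eq_mul_derivative_of_coeff_eq_exp (by simpa using hcs0)
      fun j => by rw [coeff_mk, hexp]
  have hG0 : constantCoeff G = 1 := by simp [G, hf0]
  have hG : ∀ j, 0 < j → ‖coeff j G‖ ≤ (Real.exp (2 * C) / ‖fc 0‖) ^ j := fun j hj => by
    simpa [G] using norm_div_le_pow_of_norm_le_exp hf0 hfc j hj
  calc ‖cs j‖ ≤ (2 * (Real.exp (2 * C) / ‖fc 0‖)) ^ j := by
        simpa using norm_coeff_le_of_derivative_eq_mul hG0 hG hGL j hj
    _ = (‖fc 0‖ ^ j)⁻¹ * Real.exp ((2 * C + Real.log 2) * j) := by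
        rw [mul_comm _ (j : ℝ), Real.exp_nat_mul, Real.exp_add, Real.exp_log two_pos,
          mul_comm _ (2 : ℝ), inv_mul_eq_div, ← div_pow, mul_div_assoc]
    _ ≤ (‖fc 0‖ ^ j)⁻¹ * Real.exp ((3 * C + Real.log 2) * j) := by
        gcongr
        linarith
end
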